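/- Normalization for IKC: in the possible-world model over the frame given by OPEs Γ ≤ Γ' and the IKC modal accessibility relation Δ ◁ Γ, with valuation V_Γ = neutrals Γ ⊢ⁿᵉ ι, there is a function quote : (∀ Δ, ⟦Γ⟧_Δ → ⟦A⟧_Δ) → (Γ ⊢ⁿᶠ A) such that the composite norm = quote ∘ ⟦−⟧ : (Γ ⊢ A) → (Γ ⊢ⁿᶠ A) is complete (t ≈ u implies norm t = norm u) and adequate (norm t = norm u implies t ≈ u). -/

import Mathlib

namespace IKC

/-- Types of the Fitch-style calculus: base type ι, functions, box. -/
inductive Ty : Type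
  | base : Ty
  | arr : Ty → Ty → Ty
  | box : Ty → Ty

/-- Typing contexts: empty, extension by a type, extension by a lock 🔒. -/
inductive Cx : Type
  | nil : Cx
  | snoc : Cx → Ty → Cx
  | lock : Cx → Cx

/-- IKC modal accessibility relation Δ ◁ Γ: Γ = Δ,🔒,Δ' with Δ' lock-free. -/
inductive Ext : Cx → Cx → Type
  | nil : Ext Γ (.lock Γ)
  | var : Ext Δ Γ → Ext Δ (.snoc Γ A)

/-- Order-preserving embeddings Γ ≤ Γ'. -/
inductive Ope : Cx → Cx → Type
  | base : Ope .nil .nil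
  | drop : Ope Γ Γ' → Ope Γ (.snoc Γ' A)
  | keep : Ope Γ Γ' → Ope (.snoc Γ A) (.snoc Γ' A)
  | keepLock : Ope Γ Γ' → Ope (.lock Γ) (.lock Γ')

/-- Identity OPE. -/
def idOpe : (Γ : Cx) → Ope Γ Γ
  | .nil => .base
  | .snoc Γ _ => .keep (idOpe Γ)
  | .lock Γ => .keepLock (idOpe Γ)

/-- De Bruijn variables (no rule through locks). -/
inductive Var : Cx → Ty → Type
  | zero : Var (.snoc Γ A) A
  | succ : Var Γ A → Var (.snoc Γ B) A

/-- Intrinsically-typed terms of IKC. -/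
inductive Tm : Cx → Ty → Type
  | var : Var Γ A → Tm Γ A
  | lam : Tm (.snoc Γ A) B → Tm Γ (.arr A B)
  | app : Tm Γ (.arr A B) → Tm Γ A → Tm Γ B
  | box : Tm (.lock Γ) A → Tm Γ (.box A)
  | unbox : Tm Δ (.box A) → Ext Δ Γ → Tm Γ A

/-- Factorization of e : Δ ◁ Γ along an OPE o : Γ ≤ Γ'. -/
def factor : {Δ Γ Γ' : Cx} → Ext Δ Γ → Ope Γ Γ' → (Δ' : Cx) × Ope Δ Δ' × Ext Δ' Γ'
  | _, _, _, e, .drop o =>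
    let f := factor e o
    ⟨f.1, f.2.1, .var f.2.2⟩
  | _, _, _, .nil, .keepLock o => ⟨_, o, .nil⟩
  | _, _, _, .var e, .keep o =>
    let f := factor e o
    ⟨f.1, f.2.1, .var f.2.2⟩

/-- An accessibility proof e : Δ ◁ Γ yields an OPE Δ,🔒 ≤ Γ. -/
def factorOpe : {Δ Γ : Cx} → Ext Δ Γ → Ope (.lock Δ) Γ
  | _, _, .nil => idOpe _
  | _, _, .var e => .drop (factorOpe e)

/-- Weakening of variables along an OPE. -/
def wkVar : {Γ Γ' : Cx} → Ope Γ Γ' → Var Γ A → Var Γ' A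
  | _, _, .drop o, v => .succ (wkVar o v)
  | _, _, .keep _, .zero => .zero
  | _, _, .keep o, .succ v => .succ (wkVar o v)

/-- Weakening (renaming) of terms along an OPE. -/
def wkTm : {Γ Γ' : Cx} → Ope Γ Γ' → Tm Γ A → Tm Γ' A
  | _, _, o, .var v => .var (wkVar o v)
  | _, _, o, .lam t => .lam (wkTm (.keep o) t)
  | _, _, o, .app t u => .app (wkTm o t) (wkTm o u)
  | _, _, o, .box t => .box (wkTm (.keepLock o) t)
  | _, _, o, .unbox t e => .unbox (wkTm (factor e o).2.1 t) (factor e o).2.2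

/-- Substitutions Γ ⊢ˢ s : Δ. -/
inductive Sub : Cx → Cx → Type
  | empty : Sub Γ .nil
  | snoc : Sub Γ Δ → Tm Γ A → Sub Γ (.snoc Δ A)
  | lock : Sub Θ Δ → Ext Θ Γ → Sub Γ (.lock Δ)

/-- Weakening of substitutions along an OPE. -/
def wkSub : {Γ Γ' Δ : Cx} → Ope Γ Γ' → Sub Γ Δ → Sub Γ' Δ
  | _, _, _, _, .empty => .empty
  | _, _, _, o, .snoc s t => .snoc (wkSub o s) (wkTm o t)
  | _, _, _, o, .lock s e => .lock (wkSub (factor e o).2.1 s) (factor e o).2.2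

/-- Identity substitution. -/
def idSub : (Γ : Cx) → Sub Γ Γ
  | .nil => .empty
  | .snoc Γ _ => .snoc (wkSub (.drop (idOpe Γ)) (idSub Γ)) (.var .zero)
  | .lock Γ => .lock (idSub Γ) .nil

/-- Action of a substitution on a variable. -/
def substVar : {Γ Δ : Cx} → Sub Γ Δ → Var Δ A → Tm Γ A
  | _, _, .snoc _ t, .zero => t
  | _, _, .snoc s _, .succ v => substVar s v

/-- Trimming a substitution along the modal accessibility relation. -/
def trimSub : {Γ Δ Θ : Cx} → Sub Γ Δ → Ext Θ Δ → (Θ' : Cx) × Sub Θ' Θ × Ext Θ' Γ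
  | _, _, _, .lock s e, .nil => ⟨_, s, e⟩
  | _, _, _, .snoc s _, .var e => trimSub s e

/-- Application of a substitution to a term. -/
def subst : {Γ Δ : Cx} → Sub Γ Δ → Tm Δ A → Tm Γ A
  | _, _, s, .var v => substVar s v
  | _, _, s, .lam t => .lam (subst (.snoc (wkSub (.drop (idOpe _)) s) (.var .zero)) t)
  | _, _, s, .app t u => .app (subst s t) (subst s u)
  | _, _, s, .box t => .box (subst (.lock s .nil) t)
  | _, _, s, .unbox t e => .unbox (subst (trimSub s e).2.1 t) (trimSub s e).2.2

/-- The equational theory ≈ of IKC. -/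
inductive Conv : {Γ : Cx} → {A : Ty} → Tm Γ A → Tm Γ A → Prop
  | refl (t : Tm Γ A) : Conv t t
  | symm : Conv t u → Conv u t
  | trans : Conv t u → Conv u v → Conv t v
  | congLam : Conv t t' → Conv (.lam t) (.lam t')
  | congApp : Conv t t' → Conv u u' → Conv (.app t u) (.app t' u')
  | congBox : Conv t t' → Conv (.box t) (.box t')
  | congUnbox {t t' : Tm Δ (.box A)} {e : Ext Δ Γ} :
      Conv t t' → Conv (.unbox t e) (.unbox t' e)
  | betaFun (t : Tm (.snoc Γ A) B) (u : Tm Γ A) :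
      Conv (.app (.lam t) u) (subst (.snoc (idSub Γ) u) t)
  | etaFun (t : Tm Γ (.arr A B)) :
      Conv t (.lam (.app (wkTm (.drop (idOpe Γ)) t) (.var .zero)))
  | betaBox (t : Tm (.lock Δ) A) (e : Ext Δ Γ) :
      Conv (.unbox (.box t) e) (wkTm (factorOpe e) t)
  | etaBox (t : Tm Γ (.box A)) :
      Conv t (.box (.unbox t .nil))

end IKC

namespace IKC

mutual
/-- Normal forms of IKC. -/
inductive Nf : Cx → Ty → Type
  | up : Ne Γ .base → Nf Γ .base
  | lam : Nf (.snoc Γ A) B → Nf Γ (.arr A B)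
  | box : Nf (.lock Γ) A → Nf Γ (.box A)
/-- Neutral elements of IKC. -/
inductive Ne : Cx → Ty → Type
  | var : Var Γ A → Ne Γ A
  | app : Ne Γ (.arr A B) → Nf Γ A → Ne Γ B
  | unbox : Ne Δ (.box A) → Ext Δ Γ → Ne Γ A
end

/-- Composition of OPEs. -/
def compOpe : {Γ Γ' Γ'' : Cx} → Ope Γ Γ' → Ope Γ' Γ'' → Ope Γ Γ''
  | _, _, _, o, .drop p => .drop (compOpe o p)
  | _, _, _, .drop o, .keep p => .drop (compOpe o p)
  | _, _, _, .keep o, .keep p => .keep (compOpe o p)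
  | _, _, _, .keepLock o, .keepLock p => .keepLock (compOpe o p)
  | _, _, _, .base, .base => .base

mutual
/-- Weakening of normal forms along an OPE. -/
def wkNf : {Γ Γ' : Cx} → {A : Ty} → Ope Γ Γ' → Nf Γ A → Nf Γ' A
  | _, _, _, o, .up n => .up (wkNe o n)
  | _, _, _, o, .lam n => .lam (wkNf (.keep o) n)
  | _, _, _, o, .box n => .box (wkNf (.keepLock o) n)
/-- Weakening of neutral elements along an OPE. -/
def wkNe : {Γ Γ' : Cx} → {A : Ty} → Ope Γ Γ' → Ne Γ A → Ne Γ' A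
  | _, _, _, o, .var v => .var (wkVar o v)
  | _, _, _, o, .app n m => .app (wkNe o n) (wkNf o m)
  | _, _, _, o, .unbox n e => .unbox (wkNe (factor e o).2.1 n) (factor e o).2.2
end

/-- Interpretation of types in the NbE model (worlds are contexts, ≤ is given
by OPEs, R by the modal accessibility relation ◁, and the valuation of the
base type by neutral elements). -/
def SemTy : Ty → Cx → Type
  | .base, Γ => Ne Γ .base
  | .arr A B, Γ => ∀ Γ', Ope Γ Γ' → SemTy A Γ' → SemTy B Γ'
  | .box A, Γ => ∀ Γ', Ope Γ Γ' → ∀ Δ, Ext Γ' Δ → SemTy A Δ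

/-- Interpretation of contexts in the NbE model. -/
def SemCx : Cx → Cx → Type
  | .nil, _ => PUnit
  | .snoc Γ A, Δ => SemCx Γ Δ × SemTy A Δ
  | .lock Γ, Δ => (Θ : Cx) × SemCx Γ Θ × Ext Θ Δ

/-- Monotonicity for the NbE interpretation of types. -/
def wkSemTy : (A : Ty) → {Δ Δ' : Cx} → Ope Δ Δ' → SemTy A Δ → SemTy A Δ'
  | .base, _, _, o, n => wkNe o n
  | .arr _ _, _, _, o, f => fun Γ'' o' a => f Γ'' (compOpe o o') a
  | .box _, _, _, o, b => fun Γ'' o' Θ e => b Γ'' (compOpe o o') Θ e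

/-- Monotonicity for the NbE interpretation of contexts. -/
def wkSemCx : (Γ : Cx) → {Δ Δ' : Cx} → Ope Δ Δ' → SemCx Γ Δ → SemCx Γ Δ'
  | .nil, _, _, _, _ => PUnit.unit
  | .snoc Γ A, _, _, o, γ => (wkSemCx Γ o γ.1, wkSemTy A o γ.2)
  | .lock Γ, _, _, o, γ => ⟨(factor γ.2.2 o).1, wkSemCx Γ (factor γ.2.2 o).2.1 γ.2.1, (factor γ.2.2 o).2.2⟩

/-- Looking up a variable in an NbE environment. -/
def lookup : {Γ : Cx} → {A : Ty} → Var Γ A → ∀ {Δ}, SemCx Γ Δ → SemTy A Δ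
  | _, _, .zero, _, γ => γ.2
  | _, _, .succ v, _, γ => lookup v γ.1

/-- Trimming an NbE environment along the modal accessibility relation. -/
def trimSem : {Θ Γ : Cx} → Ext Θ Γ → ∀ {Δ}, SemCx Γ Δ → SemCx (.lock Θ) Δ
  | _, _, .nil, _, γ => γ
  | _, _, .var e, _, γ => trimSem e γ.1

/-- Evaluation of IKC terms in the NbE model. -/
def eval : {Γ : Cx} → {A : Ty} → Tm Γ A → ∀ Δ, SemCx Γ Δ → SemTy A Δ
  | _, _, .var v, _, γ => lookup v γ
  | _, _, .lam t, _, γ => fun Γ' o a => eval t Γ' (wkSemCx _ o γ, a)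
  | _, _, .app t u, Δ, γ => eval t Δ γ Δ (idOpe Δ) (eval u Δ γ)
  | _, _, .box t, _, γ => fun Γ' o Θ e => eval t Θ ⟨Γ', wkSemCx _ o γ, e⟩
  | _, _, .unbox t e, Δ, γ =>
    let d := trimSem e γ
    eval t d.1 d.2.1 d.1 (idOpe d.1) Δ d.2.2

/-!
Normalization by evaluation. A denotation is quoted by applying it to the environment of
reflected variables and reifying the result.

Completeness: evaluation sends convertible terms to values related by a Kripke partial
equivalence. At function and box types this relation also requires related values to commute
with weakening; that uniformity is what validates the η-laws, and reification maps related
values to the same normal form.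

Adequacy: a Kripke logical relation between terms and values, closed under conversion and
weakening and sandwiched between reflection and reification, relates every substitution
instance of a term to its value. At the identity substitution this gives t ≈ reify (eval t).
-/

/-! ### Renaming and substitution -/

theorem compOpe_id_right : ∀ {Γ Γ' : Cx} (o : Ope Γ Γ'), compOpe o (idOpe Γ') = o
  | _, _, .base => rfl
  | _, _, .drop o => by simp only [idOpe, compOpe, compOpe_id_right o]
  | _, _, .keep o => by simp only [idOpe, compOpe, compOpe_id_right o]
  | _, _, .keepLock o => by simp only [idOpe, compOpe, compOpe_id_right o]

theorem compOpe_id_left : ∀ {Γ Γ' : Cx} (o : Ope Γ Γ'), compOpe (idOpe Γ) o = o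
  | _, _, .base => rfl
  | _, _, .drop o => by simp only [compOpe, compOpe_id_left o]
  | _, _, .keep o => by simp only [idOpe, compOpe, compOpe_id_left o]
  | _, _, .keepLock o => by simp only [idOpe, compOpe, compOpe_id_left o]

theorem compOpe_assoc : ∀ {Γ₀ Γ₁ Γ₂ Γ₃ : Cx} (o : Ope Γ₀ Γ₁) (p : Ope Γ₁ Γ₂) (q : Ope Γ₂ Γ₃),
    compOpe (compOpe o p) q = compOpe o (compOpe p q)
  | _, _, _, _, o, p, .drop q => by simp only [compOpe, compOpe_assoc o p q]
  | _, _, _, _, o, .drop p, .keep q => by simp only [compOpe, compOpe_assoc o p q]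
  | _, _, _, _, .drop o, .keep p, .keep q => by simp only [compOpe, compOpe_assoc o p q]
  | _, _, _, _, .keep o, .keep p, .keep q => by simp only [compOpe, compOpe_assoc o p q]
  | _, _, _, _, .keepLock o, .keepLock p, .keepLock q => by
      simp only [compOpe, compOpe_assoc o p q]
  | _, _, _, _, .base, .base, .base => rfl

theorem factor_drop {Δ Γ Γ' : Cx} {A : Ty} (e : Ext Δ Γ) (o : Ope Γ Γ') :
    factor e (.drop (A := A) o) = ⟨(factor e o).1, (factor e o).2.1, .var (factor e o).2.2⟩ := by
  simp only [factor]

theorem factor_keep {Δ Γ Γ' : Cx} {A : Ty} (e : Ext Δ Γ) (o : Ope Γ Γ') :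
    factor (.var (A := A) e) (.keep o)
      = ⟨(factor e o).1, (factor e o).2.1, .var (factor e o).2.2⟩ := by
  simp only [factor]

theorem factor_lock {Γ Γ' : Cx} (o : Ope Γ Γ') :
    factor (.nil (Γ := Γ)) (.keepLock o) = ⟨Γ', o, .nil⟩ := by
  simp only [factor]

theorem factor_id : ∀ {Δ Γ : Cx} (e : Ext Δ Γ), factor e (idOpe Γ) = ⟨Δ, idOpe Δ, e⟩
  | _, _, .nil => rfl
  | _, _, .var e => by simp only [idOpe, factor]; rw [factor_id e]

theorem factor_comp : ∀ {Δ Γ Γ' Γ'' : Cx} (e : Ext Δ Γ) (o : Ope Γ Γ') (p : Ope Γ' Γ''),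
    factor e (compOpe o p) =
      ⟨(factor (factor e o).2.2 p).1,
        compOpe (factor e o).2.1 (factor (factor e o).2.2 p).2.1,
        (factor (factor e o).2.2 p).2.2⟩
  | _, _, _, _, e, o, .drop p => by
      rw [factor_drop (factor e o).2.2 p]
      simp only [compOpe]
      rw [factor_drop e (compOpe o p), factor_comp e o p]
  | _, _, _, _, e, .drop o, .keep p => by
      rw [factor_drop e o]
      simp only [compOpe]
      rw [factor_keep (factor e o).2.2 p]
      rw [factor_drop e (compOpe o p), factor_comp e o p]
  | _, _, _, _, .var e, .keep o, .keep p => by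
      rw [factor_keep e o]
      simp only [compOpe]
      rw [factor_keep (factor e o).2.2 p]
      rw [factor_keep e (compOpe o p), factor_comp e o p]
  | _, _, _, _, .nil, .keepLock o, .keepLock p => by
      rw [factor_lock o]
      simp only [compOpe]
      rw [factor_lock p, factor_lock (compOpe o p)]
  | _, _, _, _, e, o, .base => by cases o; cases e

theorem factor_nil_factorOpe : ∀ {Δ Γ : Cx} (e : Ext Δ Γ),
    factor .nil (factorOpe e) = ⟨Δ, idOpe Δ, e⟩
  | _, _, .nil => factor_id .nil
  | _, _, .var e => by
      simp only [factorOpe]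
      rw [factor_drop, factor_nil_factorOpe e]

theorem factorOpe_comp : ∀ {Δ Γ Γ' : Cx} (e : Ext Δ Γ) (o : Ope Γ Γ'),
    compOpe (factorOpe e) o = compOpe (.keepLock (factor e o).2.1) (factorOpe (factor e o).2.2)
  | _, _, _, e, .drop o => by
      rw [factor_drop e o]
      simp only [compOpe, factorOpe, factorOpe_comp e o]
  | _, _, _, .var e, .keep o => by
      rw [factor_keep e o]
      simp only [factorOpe, compOpe, factorOpe_comp e o]
  | _, _, _, .nil, .keepLock o => by
      rw [factor_lock o]
      simp only [factorOpe, idOpe, compOpe, compOpe_id_left, compOpe_id_right]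

theorem wkVar_id : ∀ {Γ : Cx} {A : Ty} (v : Var Γ A), wkVar (idOpe Γ) v = v
  | _, _, .zero => rfl
  | _, _, .succ v => by simp only [idOpe, wkVar, wkVar_id v]

theorem wkVar_comp : ∀ {Γ Γ' Γ'' : Cx} {A : Ty} (o : Ope Γ Γ') (p : Ope Γ' Γ'') (v : Var Γ A),
    wkVar p (wkVar o v) = wkVar (compOpe o p) v
  | _, _, _, _, o, .drop p, v => by simp only [compOpe, wkVar, wkVar_comp o p v]
  | _, _, _, _, .drop o, .keep p, v => by simp only [compOpe, wkVar, wkVar_comp o p v]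
  | _, _, _, _, .keep o, .keep p, .zero => rfl
  | _, _, _, _, .keep o, .keep p, .succ v => by simp only [compOpe, wkVar, wkVar_comp o p v]
  | _, _, _, _, .base, _, v => nomatch v
  | _, _, _, _, .keepLock _, _, v => nomatch v

theorem wkTm_id : ∀ {Γ : Cx} {A : Ty} (t : Tm Γ A), wkTm (idOpe Γ) t = t
  | _, _, .var v => by simp only [wkTm, wkVar_id]
  | _, _, .lam t => by
      have ih := wkTm_id t
      simp only [idOpe] at ih
      simp only [wkTm, ih]
  | _, _, .app t u => by simp only [wkTm, wkTm_id t, wkTm_id u]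
  | _, _, .box t => by
      have ih := wkTm_id t
      simp only [idOpe] at ih
      simp only [wkTm, ih]
  | _, _, .unbox t e => by
      simp only [wkTm]
      rw [factor_id e, wkTm_id t]

theorem wkTm_comp : ∀ {Γ Γ' Γ'' : Cx} {A : Ty} (o : Ope Γ Γ') (p : Ope Γ' Γ'') (t : Tm Γ A),
    wkTm p (wkTm o t) = wkTm (compOpe o p) t
  | _, _, _, _, o, p, .var v => by simp only [wkTm, wkVar_comp]
  | _, _, _, _, o, p, .lam t => by
      have ih := wkTm_comp (.keep o) (.keep p) t
      simp only [compOpe] at ih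
      simp only [wkTm, ih]
  | _, _, _, _, o, p, .app t u => by simp only [wkTm, wkTm_comp o p t, wkTm_comp o p u]
  | _, _, _, _, o, p, .box t => by
      have ih := wkTm_comp (.keepLock o) (.keepLock p) t
      simp only [compOpe] at ih
      simp only [wkTm, ih]
  | _, _, _, _, o, p, .unbox t e => by
      simp only [wkTm]
      rw [factor_comp e o p,
        wkTm_comp (factor e o).2.1 (factor (factor e o).2.2 p).2.1 t]

theorem trimSub_lock {Γ Δ Θ : Cx} (s : Sub Θ Δ) (e : Ext Θ Γ) :
    trimSub (.lock s e) .nil = ⟨Θ, s, e⟩ := by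
  simp only [trimSub]

theorem trimSub_var {Γ Δ Θ : Cx} {A : Ty} (s : Sub Γ Δ) (t : Tm Γ A) (e : Ext Θ Δ) :
    trimSub (.snoc s t) (.var e) = trimSub s e := by
  simp only [trimSub]

theorem wkSub_id : ∀ {Γ Δ : Cx} (s : Sub Γ Δ), wkSub (idOpe Γ) s = s
  | _, _, .empty => by simp only [wkSub]
  | _, _, .snoc s t => by simp only [wkSub, wkSub_id s, wkTm_id t]
  | _, _, .lock s e => by
      simp only [wkSub]
      rw [factor_id e, wkSub_id s]

theorem wkSub_comp : ∀ {Γ Γ' Γ'' Δ : Cx} (o : Ope Γ Γ') (p : Ope Γ' Γ'') (s : Sub Γ Δ),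
    wkSub p (wkSub o s) = wkSub (compOpe o p) s
  | _, _, _, _, o, p, .empty => by simp only [wkSub]
  | _, _, _, _, o, p, .snoc s t => by simp only [wkSub, wkSub_comp o p s, wkTm_comp o p t]
  | _, _, _, _, o, p, .lock s e => by
      simp only [wkSub]
      rw [factor_comp e o p,
        wkSub_comp (factor e o).2.1 (factor (factor e o).2.2 p).2.1 s]

def restrictSub : {Δ Δ' Γ : Cx} → Ope Δ Δ' → Sub Γ Δ' → Sub Γ Δ
  | _, _, _, .base, s => s
  | _, _, _, .drop o, .snoc s _ => restrictSub o s
  | _, _, _, .keep o, .snoc s t => .snoc (restrictSub o s) t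
  | _, _, _, .keepLock o, .lock s e => .lock (restrictSub o s) e

theorem restrictSub_id : ∀ {Δ Γ : Cx} (s : Sub Γ Δ), restrictSub (idOpe Δ) s = s
  | _, _, .empty => rfl
  | _, _, .snoc s t => by simp only [idOpe, restrictSub, restrictSub_id s]
  | _, _, .lock s e => by simp only [idOpe, restrictSub, restrictSub_id s]

theorem restrictSub_wkSub : ∀ {Δ Δ' Γ Γ' : Cx} (p : Ope Δ Δ') (q : Ope Γ Γ') (s : Sub Γ Δ'),
    restrictSub p (wkSub q s) = wkSub q (restrictSub p s)
  | _, _, _, _, .base, q, .empty => by simp only [wkSub, restrictSub]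
  | _, _, _, _, .drop p, q, .snoc s t => by
      simp only [wkSub, restrictSub, restrictSub_wkSub p q s]
  | _, _, _, _, .keep p, q, .snoc s t => by
      simp only [wkSub, restrictSub, restrictSub_wkSub p q s]
  | _, _, _, _, .keepLock p, q, .lock s e => by
      simp only [wkSub, restrictSub, restrictSub_wkSub p _ s]

theorem substVar_wkSub : ∀ {Γ Γ' Δ : Cx} {A : Ty} (o : Ope Γ Γ') (s : Sub Γ Δ) (v : Var Δ A),
    substVar (wkSub o s) v = wkTm o (substVar s v)
  | _, _, _, _, o, .snoc s t, .zero => by simp only [wkSub, substVar]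
  | _, _, _, _, o, .snoc s t, .succ v => by simp only [wkSub, substVar, substVar_wkSub o s v]

theorem substVar_restrictSub : ∀ {Δ Δ' Γ : Cx} {A : Ty} (o : Ope Δ Δ') (s : Sub Γ Δ')
    (v : Var Δ A), substVar (restrictSub o s) v = substVar s (wkVar o v)
  | _, _, _, _, .drop o, .snoc s t, v => by
      simp only [restrictSub, wkVar, substVar, substVar_restrictSub o s v]
  | _, _, _, _, .keep o, .snoc s t, .zero => by simp only [restrictSub, wkVar, substVar]
  | _, _, _, _, .keep o, .snoc s t, .succ v => by
      simp only [restrictSub, wkVar, substVar, substVar_restrictSub o s v]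

theorem trimSub_wkSub : ∀ {Γ Γ' Δ Θ : Cx} (o : Ope Γ Γ') (s : Sub Γ Δ) (e : Ext Θ Δ),
    trimSub (wkSub o s) e =
      ⟨(factor (trimSub s e).2.2 o).1,
        wkSub (factor (trimSub s e).2.2 o).2.1 (trimSub s e).2.1,
        (factor (trimSub s e).2.2 o).2.2⟩
  | _, _, _, _, o, .lock s e₀, .nil => by
      rw [trimSub_lock s e₀]
      simp only [wkSub]
      rw [trimSub_lock]
  | _, _, _, _, o, .snoc s t, .var e => by
      rw [trimSub_var s t e]
      simp only [wkSub]
      rw [trimSub_var, trimSub_wkSub o s e]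

theorem trimSub_restrictSub : ∀ {Δ Δ' Γ Θ : Cx} (o : Ope Δ Δ') (s : Sub Γ Δ') (e : Ext Θ Δ),
    trimSub (restrictSub o s) e =
      ⟨(trimSub s (factor e o).2.2).1,
        restrictSub (factor e o).2.1 (trimSub s (factor e o).2.2).2.1,
        (trimSub s (factor e o).2.2).2.2⟩
  | _, _, _, _, .drop o, .snoc s t, e => by
      rw [factor_drop e o]
      simp only [restrictSub]
      rw [trimSub_var, trimSub_restrictSub o s e]
  | _, _, _, _, .keep o, .snoc s t, .var e => by
      rw [factor_keep e o]
      simp only [restrictSub]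
      rw [trimSub_var, trimSub_var, trimSub_restrictSub o s e]
  | _, _, _, _, .keepLock o, .lock s e₀, .nil => by
      rw [factor_lock o]
      simp only [restrictSub]
      rw [trimSub_lock, trimSub_lock]

theorem wkTm_subst : ∀ {Γ Γ' Δ : Cx} {A : Ty} (o : Ope Γ Γ') (s : Sub Γ Δ) (t : Tm Δ A),
    wkTm o (subst s t) = subst (wkSub o s) t
  | _, _, _, _, o, s, .var v => by simp only [subst, substVar_wkSub]
  | _, _, _, _, o, s, .lam t => by
      simp only [subst, wkTm]
      rw [wkTm_subst (.keep o) _ t]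
      simp only [wkSub, wkTm, wkVar]
      rw [wkSub_comp, wkSub_comp]
      simp only [compOpe, compOpe_id_left, compOpe_id_right]
  | _, _, _, _, o, s, .app t u => by
      simp only [subst, wkTm, wkTm_subst o s t, wkTm_subst o s u]
  | _, _, _, _, o, s, .box t => by
      simp only [subst, wkTm]
      rw [wkTm_subst (.keepLock o) _ t]
      simp only [wkSub]
      rw [factor_lock o]
  | _, _, _, _, o, s, .unbox t e => by
      simp only [subst, wkTm]
      rw [trimSub_wkSub o s e, wkTm_subst (factor (trimSub s e).2.2 o).2.1 _ t]

theorem subst_wkTm : ∀ {Δ Δ' Γ : Cx} {A : Ty} (o : Ope Δ Δ') (s : Sub Γ Δ') (t : Tm Δ A),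
    subst s (wkTm o t) = subst (restrictSub o s) t
  | _, _, _, _, o, s, .var v => by simp only [subst, wkTm, substVar_restrictSub]
  | _, _, _, _, o, s, .lam t => by
      simp only [subst, wkTm]
      rw [subst_wkTm (.keep o) _ t]
      simp only [restrictSub]
      rw [restrictSub_wkSub]
  | _, _, _, _, o, s, .app t u => by
      simp only [subst, wkTm, subst_wkTm o s t, subst_wkTm o s u]
  | _, _, _, _, o, s, .box t => by
      simp only [subst, wkTm]
      rw [subst_wkTm (.keepLock o) _ t]
      simp only [restrictSub]
  | _, _, _, _, o, s, .unbox t e => by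
      simp only [subst, wkTm]
      rw [trimSub_restrictSub o s e, subst_wkTm (factor e o).2.1 _ t]

theorem restrictSub_idSub : ∀ {Γ Γ' : Cx} (o : Ope Γ Γ'),
    restrictSub o (idSub Γ') = wkSub o (idSub Γ)
  | _, _, .base => rfl
  | _, _, .drop o => by
      simp only [idSub, restrictSub]
      rw [restrictSub_wkSub, restrictSub_idSub o, wkSub_comp]
      simp only [compOpe, compOpe_id_right]
  | _, _, .keep o => by
      simp only [idSub, restrictSub, wkSub, wkTm, wkVar]
      rw [restrictSub_wkSub, restrictSub_idSub o, wkSub_comp, wkSub_comp]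
      simp only [compOpe, compOpe_id_left, compOpe_id_right]
  | _, _, .keepLock o => by
      simp only [idSub, restrictSub, wkSub]
      rw [factor_lock o, restrictSub_idSub o]

theorem substVar_idSub : ∀ {Γ : Cx} {A : Ty} (v : Var Γ A), substVar (idSub Γ) v = .var v
  | _, _, .zero => by simp only [idSub, substVar]
  | _, _, .succ v => by
      simp only [idSub, substVar]
      rw [substVar_wkSub, substVar_idSub v]
      simp only [wkTm, wkVar, wkVar_id]

theorem trimSub_idSub : ∀ {Γ Θ : Cx} (e : Ext Θ Γ), trimSub (idSub Γ) e = ⟨Θ, idSub Θ, e⟩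
  | _, _, .nil => by simp only [idSub]; rw [trimSub_lock]
  | _, _, .var e => by
      simp only [idSub]
      rw [trimSub_var, trimSub_wkSub, trimSub_idSub e, factor_drop, factor_id e, wkSub_id]

theorem subst_idSub : ∀ {Γ : Cx} {A : Ty} (t : Tm Γ A), subst (idSub Γ) t = t
  | _, _, .var v => by simp only [subst, substVar_idSub]
  | _, _, .lam t => by
      have ih := subst_idSub t
      simp only [idSub] at ih
      simp only [subst, ih]
  | _, _, .app t u => by simp only [subst, subst_idSub t, subst_idSub u]
  | _, _, .box t => by
      have ih := subst_idSub t
      simp only [idSub] at ih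
      simp only [subst, ih]
  | _, _, .unbox t e => by
      simp only [subst]
      rw [trimSub_idSub e, subst_idSub t]

def compSub : {Γ Δ Θ : Cx} → Sub Γ Δ → Sub Δ Θ → Sub Γ Θ
  | _, _, _, _, .empty => .empty
  | _, _, _, s₁, .snoc s₂ t => .snoc (compSub s₁ s₂) (subst s₁ t)
  | _, _, _, s₁, .lock s₂ e =>
    .lock (compSub (trimSub s₁ e).2.1 s₂) (trimSub s₁ e).2.2

theorem substVar_compSub : ∀ {Γ Δ Θ : Cx} {A : Ty} (s₁ : Sub Γ Δ) (s₂ : Sub Δ Θ)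
    (v : Var Θ A), subst s₁ (substVar s₂ v) = substVar (compSub s₁ s₂) v
  | _, _, _, _, s₁, .snoc s₂ t, .zero => by simp only [compSub, substVar]
  | _, _, _, _, s₁, .snoc s₂ t, .succ v => by
      simp only [compSub, substVar, substVar_compSub s₁ s₂ v]

theorem compSub_wkSub_right : ∀ {Γ Δ Δ' Θ : Cx} (s₁ : Sub Γ Δ') (o : Ope Δ Δ') (s₂ : Sub Δ Θ),
    compSub s₁ (wkSub o s₂) = compSub (restrictSub o s₁) s₂
  | _, _, _, _, s₁, o, .empty => by simp only [wkSub, compSub]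
  | _, _, _, _, s₁, o, .snoc s₂ t => by
      simp only [wkSub, compSub, compSub_wkSub_right s₁ o s₂, subst_wkTm]
  | _, _, _, _, s₁, o, .lock s₂ e => by
      simp only [wkSub, compSub]
      rw [trimSub_restrictSub o s₁ e, compSub_wkSub_right _ (factor e o).2.1 s₂]

theorem compSub_wkSub_left : ∀ {Γ Γ' Δ Θ : Cx} (o : Ope Γ Γ') (s₁ : Sub Γ Δ) (s₂ : Sub Δ Θ),
    compSub (wkSub o s₁) s₂ = wkSub o (compSub s₁ s₂)
  | _, _, _, _, o, s₁, .empty => by simp only [wkSub, compSub]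
  | _, _, _, _, o, s₁, .snoc s₂ t => by
      simp only [compSub, wkSub, compSub_wkSub_left o s₁ s₂, wkTm_subst]
  | _, _, _, _, o, s₁, .lock s₂ e => by
      simp only [compSub, wkSub]
      rw [trimSub_wkSub o s₁ e, compSub_wkSub_left (factor (trimSub s₁ e).2.2 o).2.1 _ s₂]

theorem trimSub_compSub : ∀ {Γ Δ Θ Θ' : Cx} (s₁ : Sub Γ Δ) (s₂ : Sub Δ Θ) (e : Ext Θ' Θ),
    trimSub (compSub s₁ s₂) e =
      ⟨(trimSub s₁ (trimSub s₂ e).2.2).1,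
        compSub (trimSub s₁ (trimSub s₂ e).2.2).2.1 (trimSub s₂ e).2.1,
        (trimSub s₁ (trimSub s₂ e).2.2).2.2⟩
  | _, _, _, _, s₁, .lock s₂ e₀, .nil => by
      rw [trimSub_lock s₂ e₀]
      simp only [compSub]
      rw [trimSub_lock]
  | _, _, _, _, s₁, .snoc s₂ t, .var e => by
      rw [trimSub_var s₂ t e]
      simp only [compSub]
      rw [trimSub_var, trimSub_compSub s₁ s₂ e]

theorem subst_subst : ∀ {Γ Δ Θ : Cx} {A : Ty} (s₁ : Sub Γ Δ) (s₂ : Sub Δ Θ) (t : Tm Θ A),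
    subst s₁ (subst s₂ t) = subst (compSub s₁ s₂) t
  | _, _, _, _, s₁, s₂, .var v => by simp only [subst, substVar_compSub]
  | _, _, _, _, s₁, s₂, .app t u => by
      simp only [subst, subst_subst s₁ s₂ t, subst_subst s₁ s₂ u]
  | _, _, _, _, s₁, s₂, .lam t => by
      simp only [subst]
      rw [subst_subst _ _ t]
      congr 2
      simp only [compSub, subst, substVar, compSub_wkSub_right, restrictSub]
      rw [restrictSub_id, compSub_wkSub_left]
  | _, _, _, _, s₁, s₂, .box t => by
      simp only [subst]
      rw [subst_subst _ _ t]
      congr 2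
  | _, _, _, _, s₁, s₂, .unbox t e => by
      simp only [subst]
      rw [trimSub_compSub s₁ s₂ e, subst_subst _ _ t]

theorem compSub_idSub_left : ∀ {Γ Δ : Cx} (s : Sub Γ Δ), compSub (idSub Γ) s = s
  | _, _, .empty => rfl
  | _, _, .snoc s t => by simp only [compSub, compSub_idSub_left s, subst_idSub]
  | _, _, .lock s e => by
      simp only [compSub]
      rw [trimSub_idSub e, compSub_idSub_left s]

theorem Conv.wk {Γ Γ' : Cx} {A : Ty} {t u : Tm Γ A} (o : Ope Γ Γ') (h : Conv t u) :
    Conv (wkTm o t) (wkTm o u) := by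
  induction h generalizing Γ' with
  | refl t => exact .refl _
  | symm _ ih => exact .symm (ih o)
  | trans _ _ ih₁ ih₂ => exact .trans (ih₁ o) (ih₂ o)
  | congLam _ ih => simp only [wkTm]; exact .congLam (ih (.keep o))
  | congApp _ _ ih₁ ih₂ => simp only [wkTm]; exact .congApp (ih₁ o) (ih₂ o)
  | congBox _ ih => simp only [wkTm]; exact .congBox (ih (.keepLock o))
  | congUnbox _ ih => simp only [wkTm]; exact .congUnbox (ih _)
  | betaFun t u =>
      have h := Conv.betaFun (wkTm (.keep o) t) (wkTm o u)
      rw [subst_wkTm] at h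
      simp only [restrictSub] at h
      rw [restrictSub_idSub] at h
      simp only [wkTm]
      rw [wkTm_subst o _ t]
      simp only [wkSub]
      exact h
  | etaFun t =>
      have h := Conv.etaFun (wkTm o t)
      rw [wkTm_comp] at h
      simp only [compOpe, compOpe_id_right] at h
      simp only [wkTm, wkVar]
      rw [wkTm_comp]
      simp only [compOpe, compOpe_id_left]
      exact h
  | betaBox t e =>
      have h := Conv.betaBox (wkTm (.keepLock (factor e o).2.1) t) (factor e o).2.2
      rw [wkTm_comp, ← factorOpe_comp, ← wkTm_comp] at h
      simp only [wkTm]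
      exact h
  | etaBox t =>
      have h := Conv.etaBox (wkTm o t)
      simp only [wkTm]
      rw [factor_lock o]
      exact h

theorem conv_app_wkTm_subst_lam {Γ Γ' Δ : Cx} {A B : Ty} (o : Ope Γ Γ') (s : Sub Γ Δ)
    (t : Tm (.snoc Δ A) B) (u : Tm Γ' A) :
    Conv (.app (wkTm o (subst s (.lam t))) u) (subst (.snoc (wkSub o s) u) t) := by
  let t' := subst (.snoc (wkSub (.drop (idOpe Γ)) s) (.var .zero)) t
  have hsub : subst (.snoc (idSub Γ') u) (wkTm (.keep o) t') = subst (.snoc (wkSub o s) u) t := by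
    rw [wkTm_subst, subst_subst]
    congr 2
    simp only [wkSub, wkTm, wkVar, compSub, subst, substVar]
    rw [wkSub_comp, compSub_wkSub_right]
    simp only [compOpe, compOpe_id_left, restrictSub]
    rw [restrictSub_idSub, compSub_wkSub_left, compSub_idSub_left]
  simpa only [subst, wkTm, hsub] using Conv.betaFun (wkTm (.keep o) t') u

theorem conv_unbox_wkTm_subst_box {Γ Γ' Δ Θ : Cx} {A : Ty} (o : Ope Γ Γ') (s : Sub Γ Δ)
    (t : Tm (.lock Δ) A) (e : Ext Γ' Θ) :
    Conv (.unbox (wkTm o (subst s (.box t))) e) (subst (.lock (wkSub o s) e) t) := by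
  simp only [subst, wkTm]
  have hβ := Conv.betaBox (wkTm (.keepLock o) (subst (.lock s .nil) t)) e
  rw [wkTm_comp (.keepLock o) (factorOpe e),
    wkTm_subst (compOpe (.keepLock o) (factorOpe e)) (.lock s .nil) t] at hβ
  simp only [wkSub] at hβ
  rwa [factor_comp, factor_lock, factor_nil_factorOpe, compOpe_id_right] at hβ

/-! ### The partial equivalence model -/

mutual
theorem wkNf_id : ∀ {Γ : Cx} {A : Ty} (n : Nf Γ A), wkNf (idOpe Γ) n = n
  | _, _, .up n => by simp only [wkNf, wkNe_id n]
  | _, _, .lam n => by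
      have ih := wkNf_id n
      simp only [idOpe] at ih
      simp only [wkNf, ih]
  | _, _, .box n => by
      have ih := wkNf_id n
      simp only [idOpe] at ih
      simp only [wkNf, ih]

theorem wkNe_id : ∀ {Γ : Cx} {A : Ty} (n : Ne Γ A), wkNe (idOpe Γ) n = n
  | _, _, .var v => by simp only [wkNe, wkVar_id]
  | _, _, .app n m => by simp only [wkNe, wkNe_id n, wkNf_id m]
  | _, _, .unbox n e => by
      simp only [wkNe]
      rw [factor_id e, wkNe_id n]
end

mutual
theorem wkNf_comp : ∀ {Γ Γ' Γ'' : Cx} {A : Ty} (o : Ope Γ Γ') (p : Ope Γ' Γ'') (n : Nf Γ A),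
    wkNf p (wkNf o n) = wkNf (compOpe o p) n
  | _, _, _, _, o, p, .up n => by simp only [wkNf, wkNe_comp o p n]
  | _, _, _, _, o, p, .lam n => by
      have ih := wkNf_comp (.keep o) (.keep p) n
      simp only [compOpe] at ih
      simp only [wkNf, ih]
  | _, _, _, _, o, p, .box n => by
      have ih := wkNf_comp (.keepLock o) (.keepLock p) n
      simp only [compOpe] at ih
      simp only [wkNf, ih]

theorem wkNe_comp : ∀ {Γ Γ' Γ'' : Cx} {A : Ty} (o : Ope Γ Γ') (p : Ope Γ' Γ'') (n : Ne Γ A),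
    wkNe p (wkNe o n) = wkNe (compOpe o p) n
  | _, _, _, _, o, p, .var v => by simp only [wkNe, wkVar_comp]
  | _, _, _, _, o, p, .app n m => by simp only [wkNe, wkNe_comp o p n, wkNf_comp o p m]
  | _, _, _, _, o, p, .unbox n e => by
      simp only [wkNe]
      rw [factor_comp e o p,
        wkNe_comp (factor e o).2.1 (factor (factor e o).2.2 p).2.1 n]
end

theorem wkSemTy_id : ∀ (A : Ty) {Δ : Cx} (d : SemTy A Δ), wkSemTy A (idOpe Δ) d = d
  | .base, _, n => wkNe_id n
  | .arr A B, _, f => by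
      funext Γ'' o' a
      simp only [wkSemTy, compOpe_id_left]
  | .box A, _, b => by
      funext Γ'' o' Θ e
      simp only [wkSemTy, compOpe_id_left]

theorem wkSemTy_comp : ∀ (A : Ty) {Δ Δ' Δ'' : Cx} (o : Ope Δ Δ') (p : Ope Δ' Δ'')
    (d : SemTy A Δ), wkSemTy A p (wkSemTy A o d) = wkSemTy A (compOpe o p) d
  | .base, _, _, _, o, p, n => wkNe_comp o p n
  | .arr A B, _, _, _, o, p, f => by
      funext Γ'' o' a
      simp only [wkSemTy, compOpe_assoc]
  | .box A, _, _, _, o, p, b => by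
      funext Γ'' o' Θ e
      simp only [wkSemTy, compOpe_assoc]

theorem wkSemCx_id : ∀ (Γ : Cx) {Δ : Cx} (γ : SemCx Γ Δ), wkSemCx Γ (idOpe Δ) γ = γ
  | .nil, _, γ => rfl
  | .snoc Γ A, _, γ => by
      show (wkSemCx Γ _ γ.1, wkSemTy A _ γ.2) = γ
      rw [wkSemCx_id Γ γ.1, wkSemTy_id A γ.2]
      rfl
  | .lock Γ, _, γ => by
      show ⟨(factor γ.2.2 _).1, wkSemCx Γ (factor γ.2.2 _).2.1 γ.2.1, (factor γ.2.2 _).2.2⟩ = γ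
      rw [factor_id γ.2.2, wkSemCx_id Γ γ.2.1]
      rfl

theorem wkSemCx_comp : ∀ (Γ : Cx) {Δ Δ' Δ'' : Cx} (o : Ope Δ Δ') (p : Ope Δ' Δ'')
    (γ : SemCx Γ Δ), wkSemCx Γ p (wkSemCx Γ o γ) = wkSemCx Γ (compOpe o p) γ
  | .nil, _, _, _, o, p, γ => rfl
  | .snoc Γ A, _, _, _, o, p, γ => by
      show (wkSemCx Γ p (wkSemCx Γ o γ.1), wkSemTy A p (wkSemTy A o γ.2)) = _
      rw [wkSemCx_comp Γ o p γ.1, wkSemTy_comp A o p γ.2]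
      rfl
  | .lock Γ, _, _, _, o, p, γ => by
      show (⟨(factor (factor γ.2.2 o).2.2 p).1,
          wkSemCx Γ (factor (factor γ.2.2 o).2.2 p).2.1 (wkSemCx Γ (factor γ.2.2 o).2.1 γ.2.1),
          (factor (factor γ.2.2 o).2.2 p).2.2⟩ : SemCx (.lock Γ) _)
        = ⟨(factor γ.2.2 (compOpe o p)).1,
            wkSemCx Γ (factor γ.2.2 (compOpe o p)).2.1 γ.2.1,
            (factor γ.2.2 (compOpe o p)).2.2⟩
      rw [factor_comp γ.2.2 o p,
        wkSemCx_comp Γ (factor γ.2.2 o).2.1 (factor (factor γ.2.2 o).2.2 p).2.1 γ.2.1]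


def SemEq : (A : Ty) → {Γ : Cx} → SemTy A Γ → SemTy A Γ → Prop
  | .base, _, n, n' => n = n'
  | .arr A B, Γ, f, f' => ∀ Γ' (o : Ope Γ Γ') Γ'' (o' : Ope Γ' Γ'') (a a' : SemTy A Γ'),
      SemEq A a a' →
        SemEq B (wkSemTy B o' (f Γ' o a)) (f' Γ'' (compOpe o o') (wkSemTy A o' a'))
  | .box A, Γ, b, b' => ∀ Γ' (o : Ope Γ Γ') Δ (e : Ext Γ' Δ) Δ' (o' : Ope Δ Δ'),
      SemEq A (wkSemTy A o' (b Γ' o Δ e))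
        (b' (factor e o').1 (compOpe o (factor e o').2.1) Δ' (factor e o').2.2)

def SemEqCx : (Γ : Cx) → {Δ : Cx} → SemCx Γ Δ → SemCx Γ Δ → Prop
  | .nil, _, _, _ => True
  | .snoc Γ A, _, γ, γ' => SemEqCx Γ γ.1 γ'.1 ∧ SemEq A γ.2 γ'.2
  | .lock Γ, Δ, γ, γ' => ∃ (Θ : Cx) (ρ ρ' : SemCx Γ Θ) (e : Ext Θ Δ),
      γ = ⟨Θ, ρ, e⟩ ∧ γ' = ⟨Θ, ρ', e⟩ ∧ SemEqCx Γ ρ ρ'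

theorem semEqCx_lock {Γ Θ Δ : Cx} {ρ ρ' : SemCx Γ Θ} (e : Ext Θ Δ) (h : SemEqCx Γ ρ ρ') :
    SemEqCx (.lock Γ) (⟨Θ, ρ, e⟩ : SemCx (.lock Γ) Δ) ⟨Θ, ρ', e⟩ :=
  ⟨Θ, ρ, ρ', e, rfl, rfl, h⟩

theorem semEq_wk : ∀ (A : Ty) {Γ Γ' : Cx} (o : Ope Γ Γ') {d d' : SemTy A Γ},
    SemEq A d d' → SemEq A (wkSemTy A o d) (wkSemTy A o d')
  | .base, _, _, o, _, _, h => congrArg (wkNe o) h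
  | .arr _ _, _, _, o, _, _, h => fun Γ' o₁ Γ'' o' a a' ha => by
      simpa only [wkSemTy, compOpe_assoc] using h Γ' (compOpe o o₁) Γ'' o' a a' ha
  | .box _, _, _, o, _, _, h => fun Γ' o₁ Δ e Δ' o' => by
      simpa only [wkSemTy, compOpe_assoc] using h Γ' (compOpe o o₁) Δ e Δ' o'

theorem semEq_app {A B : Ty} {Γ Γ' : Cx} {f f' : SemTy (.arr A B) Γ} (o : Ope Γ Γ')
    {a a' : SemTy A Γ'} (h : SemEq (.arr A B) f f') (ha : SemEq A a a') :
    SemEq B (f Γ' o a) (f' Γ' o a') := by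
  have := h Γ' o Γ' (idOpe Γ') a a' ha
  rwa [wkSemTy_id, wkSemTy_id, compOpe_id_right] at this

theorem semEq_unbox {A : Ty} {Γ Γ' Δ : Cx} {b b' : SemTy (.box A) Γ} (o : Ope Γ Γ')
    (e : Ext Γ' Δ) (h : SemEq (.box A) b b') : SemEq A (b Γ' o Δ e) (b' Γ' o Δ e) := by
  have := h Γ' o Δ e Δ (idOpe Δ)
  rwa [factor_id e, wkSemTy_id, compOpe_id_right] at this

mutual
theorem semEq_symm : ∀ (A : Ty) {Γ : Cx} {d d' : SemTy A Γ}, SemEq A d d' → SemEq A d' d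
  | .base, _, _, _, h => h.symm
  | .arr A B, _, _, _, h => fun Γ' o Γ'' o' a a' ha =>
      have ha' := semEq_symm A ha
      semEq_trans B (semEq_wk B o' (semEq_symm B (semEq_app o h ha')))
        (semEq_trans B (h Γ' o Γ'' o' a' a ha')
          (semEq_symm B (semEq_app _ h (semEq_wk A o' ha'))))
  | .box A, _, _, _, h => fun Γ' o Δ e Δ' o' =>
      semEq_trans A (semEq_wk A o' (semEq_symm A (semEq_unbox o e h)))
        (semEq_trans A (h Γ' o Δ e Δ' o') (semEq_symm A (semEq_unbox _ _ h)))

theorem semEq_trans : ∀ (A : Ty) {Γ : Cx} {d₁ d₂ d₃ : SemTy A Γ},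
    SemEq A d₁ d₂ → SemEq A d₂ d₃ → SemEq A d₁ d₃
  | .base, _, _, _, _, h₁, h₂ => h₁.trans h₂
  | .arr A B, _, _, _, _, h₁, h₂ => fun Γ' o Γ'' o' a _ ha =>
      semEq_trans B (h₁ Γ' o Γ'' o' a a (semEq_trans A ha (semEq_symm A ha)))
        (semEq_app _ h₂ (semEq_wk A o' ha))
  | .box A, _, _, _, _, h₁, h₂ => fun Γ' o Δ e Δ' o' =>
      semEq_trans A (h₁ Γ' o Δ e Δ' o') (semEq_unbox _ _ h₂)
end

theorem semEq_refl_left {A : Ty} {Γ : Cx} {d d' : SemTy A Γ} (h : SemEq A d d') :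
    SemEq A d d :=
  semEq_trans A h (semEq_symm A h)

theorem semEq_refl_right {A : Ty} {Γ : Cx} {d d' : SemTy A Γ} (h : SemEq A d d') :
    SemEq A d' d' :=
  semEq_trans A (semEq_symm A h) h

theorem semEqCx_symm : ∀ (Γ : Cx) {Δ : Cx} {γ γ' : SemCx Γ Δ},
    SemEqCx Γ γ γ' → SemEqCx Γ γ' γ
  | .nil, _, _, _, _ => trivial
  | .snoc Γ A, _, _, _, h => ⟨semEqCx_symm Γ h.1, semEq_symm A h.2⟩
  | .lock Γ, _, _, _, h => by
      obtain ⟨_, _, _, e, rfl, rfl, h⟩ := h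
      exact semEqCx_lock e (semEqCx_symm Γ h)

theorem semEqCx_trans : ∀ (Γ : Cx) {Δ : Cx} {γ₁ γ₂ γ₃ : SemCx Γ Δ},
    SemEqCx Γ γ₁ γ₂ → SemEqCx Γ γ₂ γ₃ → SemEqCx Γ γ₁ γ₃
  | .nil, _, _, _, _, _, _ => trivial
  | .snoc Γ A, _, _, _, _, h₁, h₂ => ⟨semEqCx_trans Γ h₁.1 h₂.1, semEq_trans A h₁.2 h₂.2⟩
  | .lock Γ, _, _, _, _, h₁, h₂ => by
      obtain ⟨_, _, _, e, rfl, rfl, h₁⟩ := h₁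
      obtain ⟨_, _, _, _, heq, rfl, h₂⟩ := h₂
      cases heq
      exact semEqCx_lock e (semEqCx_trans Γ h₁ h₂)

theorem semEqCx_refl_left {Γ Δ : Cx} {γ γ' : SemCx Γ Δ} (h : SemEqCx Γ γ γ') :
    SemEqCx Γ γ γ :=
  semEqCx_trans Γ h (semEqCx_symm Γ h)

theorem semEqCx_refl_right {Γ Δ : Cx} {γ γ' : SemCx Γ Δ} (h : SemEqCx Γ γ γ') :
    SemEqCx Γ γ' γ' :=
  semEqCx_trans Γ (semEqCx_symm Γ h) h

theorem semEqCx_wk : ∀ (Γ : Cx) {Δ Δ' : Cx} (o : Ope Δ Δ') {γ γ' : SemCx Γ Δ},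
    SemEqCx Γ γ γ' → SemEqCx Γ (wkSemCx Γ o γ) (wkSemCx Γ o γ')
  | .nil, _, _, _, _, _, _ => trivial
  | .snoc Γ A, _, _, o, _, _, h => ⟨semEqCx_wk Γ o h.1, semEq_wk A o h.2⟩
  | .lock Γ, _, _, o, _, _, h => by
      obtain ⟨_, _, _, e, rfl, rfl, h⟩ := h
      exact semEqCx_lock _ (semEqCx_wk Γ (factor e o).2.1 h)

mutual
def reify : (A : Ty) → {Γ : Cx} → SemTy A Γ → Nf Γ A
  | .base, _, n => .up n
  | .arr A B, Γ, f =>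
      .lam (reify B (f (Cx.snoc Γ A) (.drop (idOpe Γ)) (reflect A (.var .zero))))
  | .box A, Γ, b => .box (reify A (b Γ (idOpe Γ) (Cx.lock Γ) .nil))

def reflect : (A : Ty) → {Γ : Cx} → Ne Γ A → SemTy A Γ
  | .base, _, n => n
  | .arr A B, _, n => fun _ o a => reflect B (.app (wkNe o n) (reify A a))
  | .box A, _, n => fun _ o _ e => reflect A (.unbox (wkNe o n) e)
end

mutual
theorem reify_eq : ∀ (A : Ty) {Γ : Cx} {d d' : SemTy A Γ},
    SemEq A d d' → reify A d = reify A d'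
  | .base, _, d, d', h => congrArg Nf.up h
  | .arr A B, Γ, f, f', h => by
      simp only [reify]
      exact congrArg Nf.lam
        (reify_eq B (semEq_app (.drop (idOpe Γ)) h (reflect_self A (.var .zero))))
  | .box A, Γ, b, b', h => by
      simp only [reify]
      exact congrArg Nf.box (reify_eq A (semEq_unbox (idOpe Γ) .nil h))

theorem reify_wk : ∀ (A : Ty) {Γ Γ' : Cx} (o : Ope Γ Γ') {d : SemTy A Γ},
    SemEq A d d → wkNf o (reify A d) = reify A (wkSemTy A o d)
  | .base, _, _, o, d, _ => by simp only [reify, wkNf, wkSemTy]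
  | .arr A B, Γ, Γ', o, f, h => by
      simp only [reify, wkNf, wkSemTy]
      have hz := reflect_self A (Γ := .snoc Γ A) (.var .zero)
      rw [reify_wk B (.keep o) (semEq_app (.drop (idOpe Γ)) h hz)]
      refine congrArg Nf.lam (reify_eq B ?_)
      have hvar : SemEq A (wkSemTy A (.keep o) (reflect A (.var .zero)))
          (reflect A (.var .zero)) :=
        reflect_wk A (.keep o) (.var .zero)
      have hdrop : compOpe (.drop (A := A) (idOpe Γ)) (.keep o) = compOpe o (.drop (idOpe Γ')) := by
        simp only [compOpe, compOpe_id_left, compOpe_id_right]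
      have h' := semEq_trans B (h _ (.drop (idOpe Γ)) _ (.keep o) _ _ hz) (semEq_app _ h hvar)
      rwa [hdrop] at h'
  | .box A, Γ, Γ', o, b, h => by
      simp only [reify, wkNf, wkSemTy]
      rw [reify_wk A (.keepLock o) (semEq_unbox (idOpe Γ) .nil h)]
      refine congrArg Nf.box (reify_eq A ?_)
      have h1 := h Γ (idOpe Γ) (Cx.lock Γ) .nil (Cx.lock Γ') (.keepLock o)
      rw [factor_lock o, compOpe_id_left] at h1
      show SemEq A _ (b Γ' (compOpe o (idOpe Γ')) (Cx.lock Γ') .nil)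
      rw [compOpe_id_right]
      exact h1

theorem reflect_self : ∀ (A : Ty) {Γ : Cx} (n : Ne Γ A), SemEq A (reflect A n) (reflect A n)
  | .base, _, n => rfl
  | .arr A B, Γ, n => by
      intro Γ' o Γ'' o' a a' ha
      simp only [reflect]
      have w := reflect_wk B o' (.app (wkNe o n) (reify A a))
      simp only [wkNe] at w
      rwa [wkNe_comp, reify_wk A o' (semEq_refl_left ha), reify_eq A (semEq_wk A o' ha)] at w
  | .box A, Γ, n => by
      intro Γ' o Δ e Δ' o'
      simp only [reflect]
      have w := reflect_wk A o' (.unbox (wkNe o n) e)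
      simp only [wkNe] at w
      rwa [wkNe_comp] at w

theorem reflect_wk : ∀ (A : Ty) {Γ Γ' : Cx} (o : Ope Γ Γ') (n : Ne Γ A),
    SemEq A (wkSemTy A o (reflect A n)) (reflect A (wkNe o n))
  | .base, _, _, o, n => rfl
  | .arr A B, Γ, Γ', o, n => by
      intro Γ₁ o₁ Γ₂ o' a a' ha
      have w := reflect_wk B o' (.app (wkNe (compOpe o o₁) n) (reify A a))
      simp only [wkNe] at w
      rwa [wkNe_comp, reify_wk A o' (semEq_refl_left ha), reify_eq A (semEq_wk A o' ha),
        compOpe_assoc, ← wkNe_comp o (compOpe o₁ o') n] at w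
  | .box A, Γ, Γ', o, n => by
      intro Γ₁ o₁ Δ e Δ' o'
      have w := reflect_wk A o' (.unbox (wkNe (compOpe o o₁) n) e)
      simp only [wkNe] at w
      rwa [wkNe_comp, compOpe_assoc, ← wkNe_comp o (compOpe o₁ (factor e o').2.1) n] at w
end

theorem lookup_wk : ∀ {Γ : Cx} {A : Ty} (v : Var Γ A) {Δ Δ' : Cx} (o : Ope Δ Δ')
    (γ : SemCx Γ Δ), lookup v (wkSemCx Γ o γ) = wkSemTy A o (lookup v γ)
  | _, _, .zero, _, _, _, _ => rfl
  | _, _, .succ v, _, _, o, γ => lookup_wk v o γ.1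

theorem lookup_semEq : ∀ {Γ : Cx} {A : Ty} (v : Var Γ A) {Δ : Cx} {γ γ' : SemCx Γ Δ},
    SemEqCx Γ γ γ' → SemEq A (lookup v γ) (lookup v γ')
  | _, _, .zero, _, _, _, h => h.2
  | _, _, .succ v, _, _, _, h => lookup_semEq v h.1

theorem trimSem_semEq : ∀ {Θ Γ : Cx} (e : Ext Θ Γ) {Δ : Cx} {γ γ' : SemCx Γ Δ},
    SemEqCx Γ γ γ' → SemEqCx (.lock Θ) (trimSem e γ) (trimSem e γ')
  | _, _, .nil, _, _, _, h => h
  | _, _, .var e, _, _, _, h => trimSem_semEq e h.1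

theorem trimSem_wk : ∀ {Θ Γ : Cx} (e : Ext Θ Γ) {Δ Δ' : Cx} (o : Ope Δ Δ')
    (γ : SemCx Γ Δ), trimSem e (wkSemCx Γ o γ) = wkSemCx (.lock Θ) o (trimSem e γ)
  | _, _, .nil, _, _, _, _ => rfl
  | _, _, .var e, _, _, o, γ => trimSem_wk e o γ.1

/-! ### Evaluation respects conversion -/

abbrev Den (Γ : Cx) (A : Ty) : Type := ∀ Δ, SemCx Γ Δ → SemTy A Δ

def SemEqDen {Γ : Cx} {A : Ty} (d d' : Den Γ A) : Prop :=
  ∀ ⦃Δ : Cx⦄ ⦃γ γ' : SemCx Γ Δ⦄, SemEqCx Γ γ γ' → SemEq A (d Δ γ) (d' Δ γ')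

def Natural {Γ : Cx} {A : Ty} (d : Den Γ A) : Prop :=
  ∀ ⦃Δ Δ' : Cx⦄ (o : Ope Δ Δ') ⦃γ γ' : SemCx Γ Δ⦄, SemEqCx Γ γ γ' →
    SemEq A (d Δ' (wkSemCx Γ o γ)) (wkSemTy A o (d Δ γ'))

def NaturalCx {Γ Γ' : Cx} (σ : ∀ {Δ : Cx}, SemCx Γ Δ → SemCx Γ' Δ) : Prop :=
  ∀ ⦃Δ Δ' : Cx⦄ (o : Ope Δ Δ') ⦃γ γ' : SemCx Γ Δ⦄, SemEqCx Γ γ γ' →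
    SemEqCx Γ' (σ (wkSemCx Γ o γ)) (wkSemCx Γ' o (σ γ'))

section Denotations

variable {Γ Γ' : Cx} {A B : Ty}

theorem SemEqDen.symm {d d' : Den Γ A} (h : SemEqDen d d') : SemEqDen d' d :=
  fun _ _ _ hγ => semEq_symm A (h (semEqCx_symm Γ hγ))

theorem SemEqDen.trans {d₁ d₂ d₃ : Den Γ A} (h₁ : SemEqDen d₁ d₂) (h₂ : SemEqDen d₂ d₃) :
    SemEqDen d₁ d₃ :=
  fun _ _ _ hγ => semEq_trans A (h₁ (semEqCx_refl_left hγ)) (h₂ hγ)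

theorem Natural.semEqDen {d : Den Γ A} (hd : Natural d) : SemEqDen d d := by
  intro Δ γ γ' hγ
  simpa only [wkSemCx_id, wkSemTy_id] using hd (idOpe Δ) hγ

theorem Natural.wk_semEq {d : Den Γ A} (hd : Natural d) {Δ Δ' : Cx} (o : Ope Δ Δ')
    {γ : SemCx Γ Δ} (hγ : SemEqCx Γ γ γ) :
    SemEq A (wkSemTy A o (d Δ γ)) (d Δ' (wkSemCx Γ o γ)) :=
  semEq_symm A (hd o hγ)

theorem NaturalCx.semEqCx {σ : ∀ {Δ : Cx}, SemCx Γ Δ → SemCx Γ' Δ} (hσ : NaturalCx σ)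
    {Δ : Cx} {γ γ' : SemCx Γ Δ} (hγ : SemEqCx Γ γ γ') : SemEqCx Γ' (σ γ) (σ γ') := by
  simpa only [wkSemCx_id] using hσ (idOpe Δ) hγ

theorem Natural.comp {d : Den Γ' A} {σ : ∀ {Δ : Cx}, SemCx Γ Δ → SemCx Γ' Δ}
    (hd : Natural d) (hσ : NaturalCx σ) : Natural (fun Δ γ => d Δ (σ γ)) :=
  fun _ _ o _ _ hγ =>
    semEq_trans A (hd.semEqDen (hσ o hγ)) (hd o (hσ.semEqCx (semEqCx_refl_right hγ)))

theorem SemEqDen.comp {d d' : Den Γ' A} {σ : ∀ {Δ : Cx}, SemCx Γ Δ → SemCx Γ' Δ}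
    (hd : SemEqDen d d') (hσ : NaturalCx σ) :
    SemEqDen (fun Δ γ => d Δ (σ γ)) (fun Δ γ => d' Δ (σ γ)) :=
  fun _ _ _ hγ => hd (hσ.semEqCx hγ)

theorem naturalCx_trimSem {Θ : Cx} (e : Ext Θ Γ) : NaturalCx (trimSem e) := by
  intro Δ Δ' o γ γ' hγ
  dsimp only
  rw [trimSem_wk]
  exact semEqCx_wk _ o (trimSem_semEq e hγ)

theorem natural_lookup (v : Var Γ A) : Natural (fun _ γ => lookup v γ) := by
  intro Δ Δ' o γ γ' hγ
  dsimp only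
  rw [lookup_wk]
  exact semEq_wk A o (lookup_semEq v hγ)

def lamDen (d : Den (.snoc Γ A) B) : Den Γ (.arr A B) :=
  fun _ γ Γ' o a => d Γ' (wkSemCx Γ o γ, a)

def appDen (d : Den Γ (.arr A B)) (d' : Den Γ A) : Den Γ B :=
  fun Δ γ => d Δ γ Δ (idOpe Δ) (d' Δ γ)

def boxDen (d : Den (.lock Γ) A) : Den Γ (.box A) :=
  fun _ γ Γ' o Θ e => d Θ ⟨Γ', wkSemCx Γ o γ, e⟩

def unboxDen (d : Den Γ (.box A)) : Den (.lock Γ) A :=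
  fun Δ γ => d γ.1 γ.2.1 γ.1 (idOpe γ.1) Δ γ.2.2

theorem wkSemTy_lamDen (d : Den (.snoc Γ A) B) {Δ Δ' : Cx} (o : Ope Δ Δ') (γ : SemCx Γ Δ) :
    wkSemTy (.arr A B) o (lamDen d Δ γ) = lamDen d Δ' (wkSemCx Γ o γ) := by
  funext Γ'' o' a
  simp only [wkSemTy, lamDen, wkSemCx_comp]

theorem wkSemTy_boxDen (d : Den (.lock Γ) A) {Δ Δ' : Cx} (o : Ope Δ Δ') (γ : SemCx Γ Δ) :
    wkSemTy (.box A) o (boxDen d Δ γ) = boxDen d Δ' (wkSemCx Γ o γ) := by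
  funext Γ'' o' Θ e
  simp only [wkSemTy, boxDen, wkSemCx_comp]

theorem semEq_lamDen {d : Den (.snoc Γ A) B} {d' : Den (.snoc Γ' A) B} (hd : Natural d)
    {Δ : Cx} {γ : SemCx Γ Δ} {γ' : SemCx Γ' Δ} (hγ : SemEqCx Γ γ γ)
    (h : ∀ Δ' (o : Ope Δ Δ') (a a' : SemTy A Δ'), SemEq A a a' →
      SemEq B (d Δ' (wkSemCx Γ o γ, a)) (d' Δ' (wkSemCx Γ' o γ', a'))) :
    SemEq (.arr A B) (lamDen d Δ γ) (lamDen d' Δ γ') := by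
  intro Γ₁ o Γ₂ o' a a' ha
  have hwk := hd.wk_semEq o' (γ := (wkSemCx Γ o γ, a)) ⟨semEqCx_wk Γ o hγ, semEq_refl_left ha⟩
  simp only [wkSemCx, wkSemCx_comp] at hwk
  exact semEq_trans B hwk (h Γ₂ (compOpe o o') _ _ (semEq_wk A o' ha))

theorem semEq_boxDen {d : Den (.lock Γ) A} {d' : Den (.lock Γ') A} (hd : Natural d)
    {Δ : Cx} {γ : SemCx Γ Δ} {γ' : SemCx Γ' Δ} (hγ : SemEqCx Γ γ γ)
    (h : ∀ Δ' (o : Ope Δ Δ') Θ (e : Ext Δ' Θ),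
      SemEq A (d Θ ⟨Δ', wkSemCx Γ o γ, e⟩) (d' Θ ⟨Δ', wkSemCx Γ' o γ', e⟩)) :
    SemEq (.box A) (boxDen d Δ γ) (boxDen d' Δ γ') := by
  intro Γ₁ o Θ e Θ' o'
  have hwk := hd.wk_semEq o' (semEqCx_lock e (semEqCx_wk Γ o hγ))
  simp only [wkSemCx, wkSemCx_comp] at hwk
  exact semEq_trans A hwk (h _ _ _ _)

theorem semEqDen_lamDen {d d' : Den (.snoc Γ A) B} (hd : Natural d) (h : SemEqDen d d') :
    SemEqDen (lamDen d) (lamDen d') :=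
  fun _ _ _ hγ => semEq_lamDen hd (semEqCx_refl_left hγ) fun _ o _ _ ha =>
    h ⟨semEqCx_wk Γ o hγ, ha⟩

theorem semEqDen_boxDen {d d' : Den (.lock Γ) A} (hd : Natural d) (h : SemEqDen d d') :
    SemEqDen (boxDen d) (boxDen d') :=
  fun _ _ _ hγ => semEq_boxDen hd (semEqCx_refl_left hγ) fun _ o _ e =>
    h (semEqCx_lock e (semEqCx_wk Γ o hγ))

theorem natural_lamDen {d : Den (.snoc Γ A) B} (hd : Natural d) : Natural (lamDen d) := by
  intro Δ Δ' o γ γ' hγ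
  rw [wkSemTy_lamDen]
  exact semEq_lamDen hd (semEqCx_wk Γ o (semEqCx_refl_left hγ)) fun _ o' _ _ ha =>
    hd.semEqDen ⟨semEqCx_wk Γ o' (semEqCx_wk Γ o hγ), ha⟩

theorem natural_boxDen {d : Den (.lock Γ) A} (hd : Natural d) : Natural (boxDen d) := by
  intro Δ Δ' o γ γ' hγ
  rw [wkSemTy_boxDen]
  exact semEq_boxDen hd (semEqCx_wk Γ o (semEqCx_refl_left hγ)) fun _ o' _ e =>
    hd.semEqDen (semEqCx_lock e (semEqCx_wk Γ o' (semEqCx_wk Γ o hγ)))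

theorem semEqDen_appDen {d e : Den Γ (.arr A B)} {d' e' : Den Γ A} (h : SemEqDen d e)
    (h' : SemEqDen d' e') : SemEqDen (appDen d d') (appDen e e') :=
  fun Δ _ _ hγ => semEq_app (idOpe Δ) (h hγ) (h' hγ)

theorem natural_appDen {d : Den Γ (.arr A B)} {d' : Den Γ A} (hd : Natural d)
    (hd' : Natural d') : Natural (appDen d d') := by
  intro Δ Δ' o γ γ' hγ
  have happ := semEq_app (idOpe Δ') (hd o hγ) (hd' o hγ)
  have hnat := hd.semEqDen (semEqCx_refl_right hγ) Δ (idOpe Δ) Δ' o _ _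
    (hd'.semEqDen (semEqCx_refl_right hγ))
  simp only [wkSemTy, compOpe_id_left, compOpe_id_right] at happ hnat
  exact semEq_trans B happ (semEq_symm B hnat)

theorem semEqDen_unboxDen {d d' : Den Γ (.box A)} (h : SemEqDen d d') :
    SemEqDen (unboxDen d) (unboxDen d') := by
  intro Δ γ γ' hγ
  obtain ⟨_, _, _, e, rfl, rfl, hρ⟩ := hγ
  exact semEq_unbox _ e (h hρ)

theorem natural_unboxDen {d : Den Γ (.box A)} (hd : Natural d) : Natural (unboxDen d) := by
  intro Δ Δ' o γ γ' hγ
  obtain ⟨Θ, ρ, ρ', e, rfl, rfl, hρ⟩ := hγ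
  have hunbox := semEq_unbox (idOpe _) (factor e o).2.2 (hd (factor e o).2.1 hρ)
  have hnat := hd.semEqDen (semEqCx_refl_right hρ) Θ (idOpe Θ) Δ e Δ' o
  simp only [wkSemTy, compOpe_id_left, compOpe_id_right] at hunbox hnat
  exact semEq_trans A hunbox (semEq_symm A hnat)

theorem appDen_lamDen (d : Den (.snoc Γ A) B) (d' : Den Γ A) :
    appDen (lamDen d) d' = fun Δ γ => d Δ (γ, d' Δ γ) := by
  funext Δ γ
  simp only [appDen, lamDen, wkSemCx_id]

theorem unboxDen_boxDen (d : Den (.lock Γ) A) : unboxDen (boxDen d) = d := by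
  funext Δ γ
  simp only [unboxDen, boxDen, wkSemCx_id]
  rfl

theorem Natural.app_wk {d : Den Γ (.arr A B)} (hd : Natural d) {Δ Δ' : Cx} (o : Ope Δ Δ')
    {γ : SemCx Γ Δ} (hγ : SemEqCx Γ γ γ) {a : SemTy A Δ'} (ha : SemEq A a a) :
    SemEq B (d Δ γ Δ' o a) (d Δ' (wkSemCx Γ o γ) Δ' (idOpe Δ') a) := by
  simpa only [wkSemTy, compOpe_id_right] using semEq_app (idOpe Δ') (hd.wk_semEq o hγ) ha

theorem Natural.unbox_wk {d : Den Γ (.box A)} (hd : Natural d) {Δ Δ' Θ : Cx} (o : Ope Δ Δ')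
    (e : Ext Δ' Θ) {γ : SemCx Γ Δ} (hγ : SemEqCx Γ γ γ) :
    SemEq A (d Δ γ Δ' o Θ e) (d Δ' (wkSemCx Γ o γ) Δ' (idOpe Δ') Θ e) := by
  simpa only [wkSemTy, compOpe_id_right] using semEq_unbox (idOpe Δ') e (hd.wk_semEq o hγ)

end Denotations

theorem eval_lam {Γ : Cx} {A B : Ty} (t : Tm (.snoc Γ A) B) :
    eval (.lam t) = lamDen (eval t) := rfl

theorem eval_app {Γ : Cx} {A B : Ty} (t : Tm Γ (.arr A B)) (u : Tm Γ A) :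
    eval (.app t u) = appDen (eval t) (eval u) := rfl

theorem eval_box {Γ : Cx} {A : Ty} (t : Tm (.lock Γ) A) :
    eval (.box t) = boxDen (eval t) := rfl

theorem eval_unbox {Γ Δ : Cx} {A : Ty} (t : Tm Δ (.box A)) (e : Ext Δ Γ) :
    eval (.unbox t e) = fun Θ γ => unboxDen (eval t) Θ (trimSem e γ) := rfl

theorem natural_eval : ∀ {Γ : Cx} {A : Ty} (t : Tm Γ A), Natural (eval t)
  | _, _, .var v => natural_lookup v
  | _, _, .lam t => natural_lamDen (natural_eval t)
  | _, _, .app t u => natural_appDen (natural_eval t) (natural_eval u)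
  | _, _, .box t => natural_boxDen (natural_eval t)
  | _, _, .unbox t e => by
      rw [eval_unbox]
      exact Natural.comp (natural_unboxDen (natural_eval t)) (naturalCx_trimSem e)

/-! ### Evaluation of renamings and substitutions -/

def restrictCx : {Γ Γ' : Cx} → Ope Γ Γ' → {Θ : Cx} → SemCx Γ' Θ → SemCx Γ Θ
  | _, _, .base, _, _ => PUnit.unit
  | _, _, .drop o, _, δ => restrictCx o δ.1
  | _, _, .keep o, _, δ => (restrictCx o δ.1, δ.2)
  | _, _, .keepLock o, _, δ => ⟨δ.1, restrictCx o δ.2.1, δ.2.2⟩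

theorem restrictCx_id : ∀ {Γ Θ : Cx} (γ : SemCx Γ Θ), restrictCx (idOpe Γ) γ = γ
  | .nil, _, _ => rfl
  | .snoc _ _, _, γ => by
      simp only [idOpe, restrictCx, restrictCx_id γ.1]
      rfl
  | .lock _, _, γ => by
      simp only [idOpe, restrictCx, restrictCx_id γ.2.1]
      rfl

theorem restrictCx_wk : ∀ {Γ Γ' : Cx} (p : Ope Γ Γ') {Θ Θ' : Cx} (o : Ope Θ Θ')
    (δ : SemCx Γ' Θ), restrictCx p (wkSemCx Γ' o δ) = wkSemCx Γ o (restrictCx p δ)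
  | _, _, .base, _, _, _, _ => rfl
  | _, _, .drop p, _, _, o, δ => restrictCx_wk p o δ.1
  | _, _, .keep p, _, _, o, δ => by
      simp only [restrictCx, wkSemCx]
      rw [restrictCx_wk p o δ.1]
  | _, _, .keepLock p, _, _, o, δ => by
      simp only [restrictCx, wkSemCx]
      rw [restrictCx_wk p (factor δ.2.2 o).2.1 δ.2.1]

theorem restrictCx_factorOpe : ∀ {Θ Γ : Cx} (e : Ext Θ Γ) {Δ : Cx} (γ : SemCx Γ Δ),
    restrictCx (factorOpe e) γ = trimSem e γ
  | _, _, .nil, _, γ => restrictCx_id γ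
  | _, _, .var e, _, γ => restrictCx_factorOpe e γ.1

theorem lookup_restrictCx : ∀ {Γ Γ' : Cx} {A : Ty} (p : Ope Γ Γ') (v : Var Γ A)
    {Θ : Cx} (δ : SemCx Γ' Θ), lookup (wkVar p v) δ = lookup v (restrictCx p δ)
  | _, _, _, .drop p, v, _, δ => lookup_restrictCx p v δ.1
  | _, _, _, .keep _, .zero, _, _ => rfl
  | _, _, _, .keep p, .succ v, _, δ => lookup_restrictCx p v δ.1

theorem trimSem_restrictCx : ∀ {Δ Γ Γ' : Cx} (e : Ext Δ Γ) (p : Ope Γ Γ')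
    {Θ : Cx} (δ : SemCx Γ' Θ),
    trimSem e (restrictCx p δ) =
      ⟨(trimSem (factor e p).2.2 δ).1,
        restrictCx (factor e p).2.1 (trimSem (factor e p).2.2 δ).2.1,
        (trimSem (factor e p).2.2 δ).2.2⟩
  | _, _, _, e, .drop p, _, δ => by
      rw [factor_drop e p]
      exact trimSem_restrictCx e p δ.1
  | _, _, _, .var e, .keep p, _, δ => by
      rw [factor_keep e p]
      exact trimSem_restrictCx e p δ.1
  | _, _, _, .nil, .keepLock p, _, _ => by
      rw [factor_lock p]
      rfl

theorem eval_wkTm : ∀ {Γ Γ' : Cx} {A : Ty} (p : Ope Γ Γ') (t : Tm Γ A) {Θ : Cx}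
    (δ : SemCx Γ' Θ), eval (wkTm p t) Θ δ = eval t Θ (restrictCx p δ)
  | _, _, _, p, .var v, _, δ => lookup_restrictCx p v δ
  | _, _, _, p, .lam t, _, δ => by
      funext Γ₁ o a
      refine (eval_wkTm (.keep p) t _).trans ?_
      simp only [restrictCx, restrictCx_wk p o δ]
      rfl
  | _, _, _, p, .app t u, _, δ => by
      simp only [wkTm, eval, eval_wkTm p t, eval_wkTm p u]
  | _, _, _, p, .box t, _, δ => by
      funext Γ₁ o Θ e
      refine (eval_wkTm (.keepLock p) t _).trans ?_
      simp only [restrictCx, restrictCx_wk p o δ]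
      rfl
  | _, _, _, p, .unbox t e, _, δ => by
      simp only [wkTm, eval]
      rw [eval_wkTm (factor e p).2.1 t, trimSem_restrictCx e p δ]

def evalSub : {Γ Δ : Cx} → Sub Γ Δ → {Θ : Cx} → SemCx Γ Θ → SemCx Δ Θ
  | _, _, .empty, _, _ => PUnit.unit
  | _, _, .snoc s t, _, γ => (evalSub s γ, eval t _ γ)
  | _, _, .lock s e, _, γ =>
      ⟨(trimSem e γ).1, evalSub s (trimSem e γ).2.1, (trimSem e γ).2.2⟩

theorem evalSub_wkSub : ∀ {Γ Γ' Δ : Cx} (p : Ope Γ Γ') (s : Sub Γ Δ) {Θ : Cx}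
    (δ : SemCx Γ' Θ), evalSub (wkSub p s) δ = evalSub s (restrictCx p δ)
  | _, _, _, _, .empty, _, _ => rfl
  | _, _, _, p, .snoc s t, _, δ => by
      simp only [wkSub, evalSub]
      rw [evalSub_wkSub p s δ, eval_wkTm p t δ]
  | _, _, _, p, .lock s e, _, δ => by
      simp only [wkSub, evalSub]
      rw [evalSub_wkSub (factor e p).2.1 s, trimSem_restrictCx e p δ]

theorem evalSub_lift {Γ Δ Θ : Cx} {A : Ty} (s : Sub Γ Δ) (γ : SemCx (.snoc Γ A) Θ) :
    evalSub (.snoc (wkSub (.drop (idOpe Γ)) s) (.var .zero)) γ = (evalSub s γ.1, γ.2) := by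
  simp only [evalSub]
  rw [evalSub_wkSub]
  simp only [restrictCx]
  rw [restrictCx_id]
  rfl

theorem evalSub_id : ∀ {Γ Θ : Cx} (γ : SemCx Γ Θ), evalSub (idSub Γ) γ = γ
  | .nil, _, _ => rfl
  | .snoc _ _, _, γ => by
      simp only [idSub]
      rw [evalSub_lift, evalSub_id γ.1]
      rfl
  | .lock _, _, γ => by
      simp only [idSub, evalSub, trimSem, evalSub_id γ.2.1]
      rfl

theorem trimSem_evalSub : ∀ {Γ Δ Θ : Cx} (s : Sub Γ Δ) (e : Ext Θ Δ) {Θ₁ : Cx}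
    (γ : SemCx Γ Θ₁),
    trimSem e (evalSub s γ) =
      ⟨(trimSem (trimSub s e).2.2 γ).1,
        evalSub (trimSub s e).2.1 (trimSem (trimSub s e).2.2 γ).2.1,
        (trimSem (trimSub s e).2.2 γ).2.2⟩
  | _, _, _, .lock _ _, .nil, _, _ => rfl
  | _, _, _, .snoc s₀ _, .var e, _, γ => trimSem_evalSub s₀ e γ

theorem naturalCx_evalSub : ∀ {Γ Δ : Cx} (s : Sub Γ Δ), NaturalCx (evalSub s)
  | _, _, .empty => fun _ _ _ _ _ _ => trivial
  | _, _, .snoc s t => fun _ _ o _ _ hγ => ⟨naturalCx_evalSub s o hγ, natural_eval t o hγ⟩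
  | _, _, .lock s e => by
      intro Δ Δ' o γ γ' hγ
      obtain ⟨Θ, ρ, ρ', e', hD, hD', hρ⟩ := trimSem_semEq e hγ
      simp only [evalSub]
      rw [trimSem_wk, hD, hD']
      exact semEqCx_lock _ (naturalCx_evalSub s _ hρ)

theorem eval_substVar : ∀ {Γ Δ : Cx} {A : Ty} (v : Var Δ A) (s : Sub Γ Δ),
    SemEqDen (eval (substVar s v)) (fun _ γ => lookup v (evalSub s γ))
  | _, _, _, .zero, .snoc _ t => Natural.semEqDen (natural_eval t)
  | _, _, _, .succ v, .snoc s _ => eval_substVar v s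

theorem eval_subst : ∀ {Γ Δ : Cx} {A : Ty} (t : Tm Δ A) (s : Sub Γ Δ),
    SemEqDen (eval (subst s t)) (fun Θ γ => eval t Θ (evalSub s γ))
  | _, _, _, .var v, s => eval_substVar v s
  | _, _, _, .app t u, s => semEqDen_appDen (eval_subst t s) (eval_subst u s)
  | Γ, _, _, .lam t, s => by
      intro Δ γ γ' hγ
      simp only [subst, eval_lam]
      refine semEq_lamDen (natural_eval _) (semEqCx_refl_left hγ) fun Γ' o a a' ha => ?_
      have h := eval_subst t (.snoc (wkSub (.drop (idOpe Γ)) s) (.var .zero))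
        (γ := (wkSemCx Γ o γ, a)) (γ' := (wkSemCx Γ o γ', a')) ⟨semEqCx_wk Γ o hγ, ha⟩
      beta_reduce at h
      erw [evalSub_lift] at h
      exact semEq_trans _ h (Natural.semEqDen (natural_eval t)
        (γ := (evalSub s (wkSemCx Γ o γ'), a'))
        ⟨naturalCx_evalSub s o (semEqCx_refl_right hγ), semEq_refl_right ha⟩)
  | Γ, _, _, .box t, s => by
      intro Δ γ γ' hγ
      simp only [subst, eval_box]
      refine semEq_boxDen (natural_eval _) (semEqCx_refl_left hγ) fun Γ' o Θ e => ?_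
      exact semEq_trans _ (eval_subst t _ (semEqCx_lock e (semEqCx_wk Γ o hγ)))
        (Natural.semEqDen (natural_eval t)
          (semEqCx_lock e (naturalCx_evalSub s o (semEqCx_refl_right hγ))))
  | _, _, _, .unbox t e, s => fun _ _ γ' hγ => by
      simp only [subst, eval_unbox, trimSem_evalSub s e γ']
      exact semEqDen_unboxDen (eval_subst t _) (trimSem_semEq _ hγ)

theorem semEqDen_betaFun {Γ : Cx} {A B : Ty} (t : Tm (.snoc Γ A) B) (u : Tm Γ A) :
    SemEqDen (eval (.app (.lam t) u)) (eval (subst (.snoc (idSub Γ) u) t)) := by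
  intro Δ γ γ' hγ
  have h := (eval_subst t (.snoc (idSub Γ) u)).symm hγ
  simp only [evalSub, evalSub_id] at h
  rwa [eval_app, eval_lam, appDen_lamDen]

theorem eval_etaFun_apply {Γ : Cx} {A B : Ty} (t : Tm Γ (.arr A B)) {Δ Δ' : Cx}
    (γ : SemCx Γ Δ) (o : Ope Δ Δ') (a : SemTy A Δ') :
    eval (.lam (.app (wkTm (.drop (idOpe Γ)) t) (.var .zero))) Δ γ Δ' o a
      = eval t Δ' (wkSemCx Γ o γ) Δ' (idOpe Δ') a := by
  show eval (wkTm (.drop (idOpe Γ)) t) Δ' (wkSemCx Γ o γ, a) Δ' (idOpe Δ') a = _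
  erw [eval_wkTm]
  simp only [restrictCx, restrictCx_id]

theorem semEqDen_etaFun {Γ : Cx} {A B : Ty} (t : Tm Γ (.arr A B)) :
    SemEqDen (eval t) (eval (.lam (.app (wkTm (.drop (idOpe Γ)) t) (.var .zero)))) := by
  intro Δ γ γ' hγ Γ₁ o Γ₂ o' a a' ha
  rw [eval_etaFun_apply]
  exact semEq_trans B (Natural.semEqDen (natural_eval t) hγ Γ₁ o Γ₂ o' a a' ha)
    ((natural_eval t).app_wk _ (semEqCx_refl_right hγ) (semEq_wk A o' (semEq_refl_right ha)))

theorem semEqDen_betaBox {Γ Δ : Cx} {A : Ty} (t : Tm (.lock Δ) A) (e : Ext Δ Γ) :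
    SemEqDen (eval (.unbox (.box t) e)) (eval (wkTm (factorOpe e) t)) := by
  intro Θ γ γ' hγ
  rw [eval_unbox, eval_box, unboxDen_boxDen, eval_wkTm, restrictCx_factorOpe]
  exact Natural.semEqDen (natural_eval t) (trimSem_semEq e hγ)

theorem semEqDen_etaBox {Γ : Cx} {A : Ty} (t : Tm Γ (.box A)) :
    SemEqDen (eval t) (eval (.box (.unbox t .nil))) := by
  intro Δ γ γ' hγ Γ₁ o Θ e Θ' o'
  exact semEq_trans A (Natural.semEqDen (natural_eval t) hγ Γ₁ o Θ e Θ' o')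
    ((natural_eval t).unbox_wk _ _ (semEqCx_refl_right hγ))

theorem semEqDen_of_conv {Γ : Cx} {A : Ty} {t u : Tm Γ A} (h : Conv t u) :
    SemEqDen (eval t) (eval u) := by
  induction h with
  | refl t => exact Natural.semEqDen (natural_eval t)
  | symm _ ih => exact ih.symm
  | trans _ _ ih₁ ih₂ => exact ih₁.trans ih₂
  | congLam _ ih => exact semEqDen_lamDen (natural_eval _) ih
  | congApp _ _ ih₁ ih₂ => exact semEqDen_appDen ih₁ ih₂
  | congBox _ ih => exact semEqDen_boxDen (natural_eval _) ih
  | congUnbox _ ih =>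
      rw [eval_unbox, eval_unbox]
      exact SemEqDen.comp (semEqDen_unboxDen ih) (naturalCx_trimSem _)
  | betaFun t u => exact semEqDen_betaFun t u
  | etaFun t => exact semEqDen_etaFun t
  | betaBox t e => exact semEqDen_betaBox t e
  | etaBox t => exact semEqDen_etaBox t

mutual
def embNf : {Γ : Cx} → {A : Ty} → Nf Γ A → Tm Γ A
  | _, _, .up n => embNe n
  | _, _, .lam n => .lam (embNf n)
  | _, _, .box n => .box (embNf n)

def embNe : {Γ : Cx} → {A : Ty} → Ne Γ A → Tm Γ A
  | _, _, .var v => .var v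
  | _, _, .app n m => .app (embNe n) (embNf m)
  | _, _, .unbox n e => .unbox (embNe n) e
end

mutual
theorem embNf_wk : ∀ {Γ Γ' : Cx} {A : Ty} (o : Ope Γ Γ') (n : Nf Γ A),
    embNf (wkNf o n) = wkTm o (embNf n)
  | _, _, _, o, .up n => by simp only [wkNf, embNf, embNe_wk o n]
  | _, _, _, o, .lam n => by simp only [wkNf, embNf, wkTm, embNf_wk (.keep o) n]
  | _, _, _, o, .box n => by simp only [wkNf, embNf, wkTm, embNf_wk (.keepLock o) n]

theorem embNe_wk : ∀ {Γ Γ' : Cx} {A : Ty} (o : Ope Γ Γ') (n : Ne Γ A),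
    embNe (wkNe o n) = wkTm o (embNe n)
  | _, _, _, o, .var v => by simp only [wkNe, embNe, wkTm]
  | _, _, _, o, .app n m => by
      simp only [wkNe, embNe, wkTm, embNe_wk o n, embNf_wk o m]
  | _, _, _, o, .unbox n e => by
      simp only [wkNe, embNe, wkTm, embNe_wk (factor e o).2.1 n]
end

/-! ### The logical relation -/

def LogRel : (A : Ty) → {Γ : Cx} → Tm Γ A → SemTy A Γ → Prop
  | .base, _, t, n => Conv t (embNe n)
  | .arr A B, Γ, t, f => ∀ Γ' (o : Ope Γ Γ') (u : Tm Γ' A) (a : SemTy A Γ'),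
      LogRel A u a → LogRel B (.app (wkTm o t) u) (f Γ' o a)
  | .box A, Γ, t, b => ∀ Γ' (o : Ope Γ Γ') Δ (e : Ext Γ' Δ),
      LogRel A (.unbox (wkTm o t) e) (b Γ' o Δ e)

theorem logRel_conv : ∀ (A : Ty) {Γ : Cx} {t t' : Tm Γ A} {d : SemTy A Γ},
    Conv t t' → LogRel A t' d → LogRel A t d
  | .base, _, _, _, _, hc, h => hc.trans h
  | .arr _ B, _, _, _, _, hc, h => fun Γ' o u a hu =>
      logRel_conv B (.congApp (hc.wk o) (.refl u)) (h Γ' o u a hu)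
  | .box A, _, _, _, _, hc, h => fun Γ' o Δ e =>
      logRel_conv A (.congUnbox (hc.wk o)) (h Γ' o Δ e)

theorem logRel_wk : ∀ (A : Ty) {Γ Γ' : Cx} (o : Ope Γ Γ') {t : Tm Γ A} {d : SemTy A Γ},
    LogRel A t d → LogRel A (wkTm o t) (wkSemTy A o d)
  | .base, _, _, o, _, d, h => by
      have hc := h.wk o
      rwa [← embNe_wk o d] at hc
  | .arr _ _, _, _, o, t, _, h => fun Γ' o' u a hu => by
      have h' := h Γ' (compOpe o o') u a hu
      rwa [← wkTm_comp o o' t] at h'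
  | .box _, _, _, o, t, _, h => fun Γ' o' Δ e => by
      have h' := h Γ' (compOpe o o') Δ e
      rwa [← wkTm_comp o o' t] at h'

mutual
theorem logRel_reify : ∀ (A : Ty) {Γ : Cx} {t : Tm Γ A} {d : SemTy A Γ},
    LogRel A t d → Conv t (embNf (reify A d))
  | .base, _, t, d, h => by
      simp only [reify, embNf]
      exact h
  | .arr A B, Γ, t, f, h => by
      simp only [reify, embNf]
      refine Conv.trans (Conv.etaFun t) (Conv.congLam ?_)
      refine logRel_reify B (h _ (.drop (idOpe Γ)) (.var .zero) (reflect A (.var .zero)) ?_)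
      refine logRel_reflect A ?_
      simp only [embNe]
      exact Conv.refl _
  | .box A, Γ, t, b, h => by
      simp only [reify, embNf]
      refine Conv.trans (Conv.etaBox t) (Conv.congBox ?_)
      refine logRel_reify A ?_
      have h₁ := h Γ (idOpe Γ) (Cx.lock Γ) .nil
      rwa [wkTm_id] at h₁

theorem logRel_reflect : ∀ (A : Ty) {Γ : Cx} {t : Tm Γ A} {n : Ne Γ A},
    Conv t (embNe n) → LogRel A t (reflect A n)
  | .base, _, t, n, h => h
  | .arr A B, _, t, n, h => by
      intro Γ' o u a hu
      refine logRel_reflect B ?_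
      simp only [embNe]
      rw [embNe_wk o n]
      exact Conv.congApp (h.wk o) (logRel_reify A hu)
  | .box A, _, t, n, h => by
      intro Γ' o Δ e
      refine logRel_reflect A ?_
      simp only [embNe]
      rw [embNe_wk o n]
      exact Conv.congUnbox (h.wk o)
end

def LogRelSub : {Γ Δ : Cx} → Sub Γ Δ → SemCx Δ Γ → Prop
  | _, _, .empty, _ => True
  | _, _, .snoc (A := A) s t, ρ => LogRelSub s ρ.1 ∧ LogRel A t ρ.2
  | _, _, .lock (Θ := Θ) s e, ρ => ∃ ρ₀, ρ = ⟨Θ, ρ₀, e⟩ ∧ LogRelSub s ρ₀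

theorem logRelSub_wk : ∀ {Γ Γ' Δ : Cx} (o : Ope Γ Γ') (s : Sub Γ Δ) {ρ : SemCx Δ Γ},
    LogRelSub s ρ → LogRelSub (wkSub o s) (wkSemCx Δ o ρ)
  | _, _, _, _, .empty, _, _ => trivial
  | _, _, _, o, .snoc s _, _, h => ⟨logRelSub_wk o s h.1, logRel_wk _ o h.2⟩
  | _, _, _, o, .lock s e, _, h => by
      obtain ⟨_, rfl, h⟩ := h
      exact ⟨_, rfl, logRelSub_wk (factor e o).2.1 s h⟩

theorem logRelSub_trim : ∀ {Γ Δ Θ : Cx} (s : Sub Γ Δ) (e : Ext Θ Δ) {ρ : SemCx Δ Γ},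
    LogRelSub s ρ → LogRelSub (.lock (trimSub s e).2.1 (trimSub s e).2.2) (trimSem e ρ)
  | _, _, _, .lock _ _, .nil, _, h => h
  | _, _, _, .snoc s _, .var e, _, h => logRelSub_trim s e h.1

theorem logRel_substVar : ∀ {Γ Δ : Cx} {A : Ty} (v : Var Δ A) (s : Sub Γ Δ)
    {ρ : SemCx Δ Γ}, LogRelSub s ρ → LogRel A (substVar s v) (lookup v ρ)
  | _, _, _, .zero, .snoc _ _, _, h => h.2
  | _, _, _, .succ v, .snoc s _, _, h => logRel_substVar v s h.1

theorem logRel_subst_eval : ∀ {Γ Δ : Cx} {A : Ty} (t : Tm Δ A) (s : Sub Γ Δ)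
    (ρ : SemCx Δ Γ), LogRelSub s ρ → LogRel A (subst s t) (eval t Γ ρ)
  | _, _, _, .var v, s, _, hs => logRel_substVar v s hs
  | Γ, _, _, .app t u, s, ρ, hs => by
      have h := logRel_subst_eval t s ρ hs Γ (idOpe Γ) _ _ (logRel_subst_eval u s ρ hs)
      rwa [wkTm_id] at h
  | _, Δ, _, .lam (B := B) t, s, ρ, hs => fun _ o u a hu =>
      logRel_conv B (conv_app_wkTm_subst_lam o s t u)
        (logRel_subst_eval t (.snoc (wkSub o s) u) (wkSemCx Δ o ρ, a)
          ⟨logRelSub_wk o s hs, hu⟩)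
  | _, Δ, _, .box (A := A) t, s, ρ, hs => fun Γ' o _ e =>
      logRel_conv A (conv_unbox_wkTm_subst_box o s t e)
        (logRel_subst_eval t (.lock (wkSub o s) e) ⟨Γ', wkSemCx Δ o ρ, e⟩
          ⟨_, rfl, logRelSub_wk o s hs⟩)
  | Γ, _, _, .unbox t e, s, ρ, hs => by
      obtain ⟨ρ₀, hρ, h₀⟩ := logRelSub_trim s e hs
      have h := logRel_subst_eval t (trimSub s e).2.1 ρ₀ h₀ _ (idOpe _) Γ (trimSub s e).2.2
      rw [wkTm_id] at h
      simp only [subst, eval_unbox, hρ]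
      exact h

def reflectCx : (Γ : Cx) → SemCx Γ Γ
  | .nil => PUnit.unit
  | .snoc Γ A => (wkSemCx Γ (.drop (idOpe Γ)) (reflectCx Γ), reflect A (.var .zero))
  | .lock Γ => ⟨Γ, reflectCx Γ, .nil⟩

theorem reflectCx_self : ∀ (Γ : Cx), SemEqCx Γ (reflectCx Γ) (reflectCx Γ)
  | .nil => trivial
  | .snoc Γ A => ⟨semEqCx_wk Γ _ (reflectCx_self Γ), reflect_self A _⟩
  | .lock Γ => semEqCx_lock _ (reflectCx_self Γ)

theorem logRelSub_idSub_reflectCx : ∀ (Γ : Cx), LogRelSub (idSub Γ) (reflectCx Γ)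
  | .nil => trivial
  | .snoc Γ A =>
      ⟨logRelSub_wk _ (idSub Γ) (logRelSub_idSub_reflectCx Γ), logRel_reflect A (.refl _)⟩
  | .lock Γ => ⟨_, rfl, logRelSub_idSub_reflectCx Γ⟩

def quote {Γ : Cx} {A : Ty} (d : Den Γ A) : Nf Γ A := reify A (d Γ (reflectCx Γ))

theorem quote_eq_of_semEqDen {Γ : Cx} {A : Ty} {d d' : Den Γ A} (h : SemEqDen d d') :
    quote d = quote d' :=
  reify_eq A (h (reflectCx_self Γ))

theorem conv_embNf_quote_eval {Γ : Cx} {A : Ty} (t : Tm Γ A) :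
    Conv t (embNf (quote (eval t))) := by
  have h := logRel_subst_eval t (idSub Γ) (reflectCx Γ) (logRelSub_idSub_reflectCx Γ)
  rw [subst_idSub] at h
  exact logRel_reify A h

/-- Normalization for IKC: in the possible-world model over the frame given by
OPEs and the IKC modal accessibility relation, with valuation given by
neutrals of base type, there is a function quote from denotations to normal
forms such that norm = quote ∘ ⟦−⟧ is complete (t ≈ u implies norm t = norm u)
and adequate (norm t = norm u implies t ≈ u). -/
theorem ikc_normalization (Γ : Cx) (A : Ty) :
    ∃ quote : (∀ Δ, SemCx Γ Δ → SemTy A Δ) → Nf Γ A,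
      ∀ t u : Tm Γ A, Conv t u ↔ quote (eval t) = quote (eval u) := by
  refine ⟨quote, fun t u => ⟨fun h => quote_eq_of_semEqDen (semEqDen_of_conv h), fun h => ?_⟩⟩
  exact (conv_embNf_quote_eval t).trans (h ▸ conv_embNf_quote_eval u).symm

end IKC
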